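/- arXiv:1305.5443 — 4 statements merged into one kernel-verified Lean document; each statement's English description precedes it below -/
import Mathlib

section
/- Let S be a set of primes, let χ : ℕ → ℝ be a multiplicative function taking values in {0,1} that is characteristic on S, and let A = {n ∈ ℕ : χ(n) = 1}. Then: (i) if S has a Dirichlet density δ(S), then the limit lim_{z→1⁺} log(D_χ(z)) / log(ζ(z)) (over real z > 1, where D_χ(z) ≥ 1 and ζ(z) > 1 are real for real z > 1) exists and equals δ(S); (ii) if A has a Dedekind-Dirichlet density δ(A), then lim_{z→1⁺} D_χ(z)/ζ(z) exists and equals δ(A). -/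
/-!
By the Euler product, `log D_χ(z) = ∑_p log (∑_e χ(p^e) p^(-e z))`, and each local factor is
`1 + χ(p) p^(-z) + O(p^(-2))`, so `log D_χ(z) = P_S(z) + O(1)` uniformly in `z > 1`. Since
`(z - 1) ζ(z) → 1`, also `log ζ(z) = log (1 / (z - 1)) + o(1)` with `log (1 / (z - 1)) → ∞`, and (i)
follows by dividing. For (ii), `D_χ(z)` is the Dirichlet series of `A`, and
`D_χ / ζ = ((z - 1) D_χ) / ((z - 1) ζ)`.
-/

open Filter Topology

namespace Real

lemma abs_log_sub_le_of_mem_Icc {a t F : ℝ} (ha : 0 ≤ a) (hat : a ≤ t)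
    (hlow : 1 + a ≤ F) (hup : F ≤ 1 + a + 2 * t ^ 2) : |log F - a| ≤ 2 * t ^ 2 := by
  have hF : 0 < F := by linarith
  have hupper : log F ≤ a + 2 * t ^ 2 := by linarith [log_le_sub_one_of_pos hF]
  have hlower : a - a ^ 2 ≤ log F := calc
    a - a ^ 2 ≤ 1 - (1 + a)⁻¹ := by
      rw [show 1 - (1 + a)⁻¹ = a / (1 + a) by field_simp; ring, le_div_iff₀ (by linarith)]
      nlinarith [sq_nonneg a]
    _ ≤ 1 - F⁻¹ := by gcongr
    _ ≤ log F := one_sub_inv_le_log_of_pos hF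
  have : a ^ 2 ≤ t ^ 2 := pow_le_pow_left₀ ha hat 2
  exact abs_le.mpr ⟨by linarith, by linarith⟩

lemma hasSum_log_of_hasProd {ι : Type*} {f : ι → ℝ} {a : ℝ} (hf : HasProd f a)
    (hfn : ∀ i, f i ≠ 0) (ha : a ≠ 0) : HasSum (fun i ↦ log (f i)) (log a) := by
  refine ((continuousAt_log ha).tendsto.comp hf).congr fun s ↦ ?_
  exact log_prod fun i _ ↦ hfn i

lemma natCast_rpow_neg_le_inv {z : ℝ} (hz : 1 ≤ z) (n : ℕ) : (n : ℝ) ^ (-z) ≤ (n : ℝ)⁻¹ := by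
  rcases n.eq_zero_or_pos with rfl | hn
  · simp [zero_rpow (by linarith : -z ≠ 0)]
  calc (n : ℝ) ^ (-z) ≤ (n : ℝ) ^ (-1 : ℝ) :=
        rpow_le_rpow_of_exponent_le (by exact_mod_cast hn) (by linarith)
    _ = (n : ℝ)⁻¹ := rpow_neg_one _

end Real

section LocalFactor

variable {g : ℕ → ℝ} {t : ℝ}

lemma one_add_le_tsum_le_of_le_geometric (ht : t ≤ 2⁻¹) (hg0 : g 0 = 1)
    (hg_nonneg : ∀ e, 0 ≤ g e) (hg_le : ∀ e, g e ≤ t ^ e) :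
    1 + g 1 ≤ ∑' e, g e ∧ ∑' e, g e ≤ 1 + g 1 + 2 * t ^ 2 := by
  have ht0 : 0 ≤ t := by simpa using (hg_nonneg 1).trans (hg_le 1)
  have hgeom : Summable (t ^ ·) := summable_geometric_of_lt_one ht0 (by linarith)
  have hg : Summable g := .of_nonneg_of_le hg_nonneg hg_le hgeom
  have hsplit : ∑' e, g e = 1 + g 1 + ∑' e, g (e + 2) := by
    rw [hg.tsum_eq_zero_add, ((summable_nat_add_iff 1).mpr hg).tsum_eq_zero_add, hg0]
    ring
  have htail : ∑' e, g (e + 2) ≤ 2 * t ^ 2 := calc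
    ∑' e, g (e + 2) ≤ ∑' e, t ^ 2 * t ^ e :=
      ((summable_nat_add_iff 2).mpr hg).tsum_le_tsum (fun e ↦ (hg_le _).trans_eq (by ring))
        (hgeom.mul_left _)
    _ = t ^ 2 * (1 - t)⁻¹ := by rw [tsum_mul_left, tsum_geometric_of_lt_one ht0 (by linarith)]
    _ ≤ t ^ 2 * 2 := by
      gcongr
      rw [inv_le_comm₀ (by linarith) two_pos]
      linarith
    _ = 2 * t ^ 2 := mul_comm ..
  have htail_nonneg : 0 ≤ ∑' e, g (e + 2) := tsum_nonneg fun e ↦ hg_nonneg _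
  constructor <;> linarith

lemma abs_log_tsum_sub_le_of_le_geometric (ht : t ≤ 2⁻¹) (hg0 : g 0 = 1)
    (hg_nonneg : ∀ e, 0 ≤ g e) (hg_le : ∀ e, g e ≤ t ^ e) :
    |Real.log (∑' e, g e) - g 1| ≤ 2 * t ^ 2 :=
  have hbounds := one_add_le_tsum_le_of_le_geometric ht hg0 hg_nonneg hg_le
  Real.abs_log_sub_le_of_mem_Icc (hg_nonneg 1) ((hg_le 1).trans_eq (pow_one t))
    hbounds.1 hbounds.2

end LocalFactor

theorem abs_log_tsum_sub_tsum_primes_le {f : ℕ → ℝ} (hf1 : f 1 = 1)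
    (hmul : ∀ {m n : ℕ}, m.Coprime n → f (m * n) = f m * f n)
    (hf_nonneg : ∀ n, 0 ≤ f n) (hf_le : ∀ n, f n ≤ (n : ℝ)⁻¹) (hf : Summable f) :
    |Real.log (∑' n, f n) - ∑' p : Nat.Primes, f p| ≤
      ∑' p : Nat.Primes, 2 * ((p : ℕ) : ℝ)⁻¹ ^ 2 := by
  -- `(0 : ℝ)⁻¹ = 0` forces `f 0 = 0`.
  have hf0 : f 0 = 0 := le_antisymm (by simpa using hf_le 0) (hf_nonneg 0)
  have hfactor_ge : ∀ p : Nat.Primes, 1 ≤ ∑' e, f (p ^ e) := fun p ↦ by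
    simpa [hf1] using ((hf.comp_injective (Nat.pow_right_injective p.2.two_le)).le_tsum 0
      fun e _ ↦ hf_nonneg _)
  have hfactor : ∀ p : Nat.Primes,
      |Real.log (∑' e, f (p ^ e)) - f p| ≤ 2 * ((p : ℕ) : ℝ)⁻¹ ^ 2 := fun p ↦ by
    simpa using abs_log_tsum_sub_le_of_le_geometric (g := fun e ↦ f (p ^ e))
      (inv_anti₀ two_pos (by exact_mod_cast p.2.two_le)) (by simp [hf1])
      (fun e ↦ hf_nonneg _) (fun e ↦ by simpa using hf_le (p ^ e))
  have hD : 1 ≤ ∑' n, f n := by simpa [hf1] using hf.le_tsum 1 fun n _ ↦ hf_nonneg n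
  have hlog : HasSum (fun p : Nat.Primes ↦ Real.log (∑' e, f (p ^ e))) (Real.log (∑' n, f n)) :=
    Real.hasSum_log_of_hasProd
      (EulerProduct.eulerProduct_hasProd hf1 hmul (by simpa using hf.abs) hf0)
      (fun p ↦ by linarith [hfactor_ge p]) (by linarith)
  have hbound : Summable fun p : Nat.Primes ↦ 2 * ((p : ℕ) : ℝ)⁻¹ ^ 2 := by
    have : Summable fun n : ℕ ↦ (n : ℝ)⁻¹ ^ 2 := by
      simpa only [inv_pow] using Real.summable_nat_pow_inv.mpr one_lt_two
    exact (this.mul_left 2).comp_injective Subtype.val_injective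
  have hfp : Summable fun p : Nat.Primes ↦ f p := hf.comp_injective Subtype.val_injective
  rw [← hlog.tsum_eq, ← hlog.summable.tsum_sub hfp]
  exact tsum_of_norm_bounded hbound.hasSum fun p ↦ (Real.norm_eq_abs _).trans_le (hfactor p)

lemma tsum_mul_eq_tsum_setOf_eq_one {α : Type*} {χ : α → ℝ} (hχ : ∀ a, χ a = 0 ∨ χ a = 1)
    (g : α → ℝ) : ∑' a, χ a * g a = ∑' a : {a | χ a = 1}, g a := by
  rw [tsum_subtype]
  refine tsum_congr fun a ↦ ?_
  rcases hχ a with h | h <;> simp [h]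

lemma tsum_primes_mul_eq_tsum_subtype {S : Set ℕ} (hS : ∀ p ∈ S, p.Prime) {χ : ℕ → ℝ}
    (hχ : ∀ n, χ n = 0 ∨ χ n = 1) (hchar : ∀ p, p.Prime → (χ p = 1 ↔ p ∈ S)) (g : ℕ → ℝ) :
    ∑' p : Nat.Primes, χ p * g p = ∑' p : S, g p := calc
  ∑' p : Nat.Primes, χ p * g p = ∑' n, {p : ℕ | p.Prime}.indicator (fun n ↦ χ n * g n) n :=
    tsum_subtype {p : ℕ | p.Prime} fun n ↦ χ n * g n
  _ = ∑' n, S.indicator g n := tsum_congr fun n ↦ by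
    by_cases hn : n.Prime
    · rcases hχ n with h | h
      · have hnS : n ∉ S := fun hnS ↦ by simpa [h] using (hchar n hn).mpr hnS
        simp [hn, h, hnS]
      · simp [hn, h, (hchar n hn).mp h]
    · simp [hn, show n ∉ S from fun h ↦ hn (hS n h)]
  _ = ∑' p : S, g p := (tsum_subtype S g).symm

theorem exists_abs_log_tsum_mul_rpow_sub_tsum_primes_le {χ : ℕ → ℝ} (hχ1 : χ 1 = 1)
    (hχmul : ∀ m n : ℕ, m.Coprime n → χ (m * n) = χ m * χ n)
    (hχ_nonneg : ∀ n, 0 ≤ χ n) (hχ_le : ∀ n, χ n ≤ 1) :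
    ∃ C, ∀ z : ℝ, 1 < z →
      |Real.log (∑' n : ℕ, χ n * (n : ℝ) ^ (-z)) - ∑' p : Nat.Primes, χ p * ((p : ℕ) : ℝ) ^ (-z)|
        ≤ C := by
  refine ⟨∑' p : Nat.Primes, 2 * ((p : ℕ) : ℝ)⁻¹ ^ 2, fun z hz ↦ ?_⟩
  have hle : ∀ n : ℕ, χ n * (n : ℝ) ^ (-z) ≤ (n : ℝ) ^ (-z) := fun n ↦
    mul_le_of_le_one_left (Real.rpow_nonneg n.cast_nonneg _) (hχ_le n)
  have hnonneg : ∀ n : ℕ, 0 ≤ χ n * (n : ℝ) ^ (-z) := fun n ↦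
    mul_nonneg (hχ_nonneg n) (Real.rpow_nonneg n.cast_nonneg _)
  refine abs_log_tsum_sub_tsum_primes_le (by simp [hχ1]) (fun {m n} hmn ↦ ?_) hnonneg
    (fun n ↦ (hle n).trans (Real.natCast_rpow_neg_le_inv hz.le n))
    (.of_nonneg_of_le hnonneg hle (Real.summable_nat_rpow.mpr (by linarith)))
  simp only [hχmul m n hmn, Nat.cast_mul, Real.mul_rpow m.cast_nonneg n.cast_nonneg]
  ring

section Asymptotics

variable {α : Type*} {l : Filter α}

lemma tendsto_div_of_isBoundedUnder_abs_sub {u v L : α → ℝ} {δ : ℝ} (hL : Tendsto L l atTop)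
    (huv : IsBoundedUnder (· ≤ ·) l fun x ↦ |u x - v x|)
    (hv : Tendsto (fun x ↦ v x / L x) l (𝓝 δ)) : Tendsto (fun x ↦ u x / L x) l (𝓝 δ) := by
  obtain ⟨C, hC⟩ := huv
  have herr : Tendsto (fun x ↦ (u x - v x) / L x) l (𝓝 0) := by
    refine squeeze_zero_norm' ?_ (tendsto_const_nhds.div_atTop hL : Tendsto (C / L ·) l _)
    filter_upwards [eventually_map.mp hC, hL.eventually_gt_atTop 0] with x hx hLx
    rw [norm_div, Real.norm_eq_abs, Real.norm_of_nonneg hLx.le]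
    gcongr
  simpa [← add_div] using hv.add herr

lemma tendsto_div_of_isBoundedUnder_abs_sub_of_isBoundedUnder_abs_sub {u v w L : α → ℝ} {δ : ℝ}
    (hL : Tendsto L l atTop) (huv : IsBoundedUnder (· ≤ ·) l fun x ↦ |u x - v x|)
    (hwL : IsBoundedUnder (· ≤ ·) l fun x ↦ |w x - L x|)
    (hv : Tendsto (fun x ↦ v x / L x) l (𝓝 δ)) : Tendsto (fun x ↦ u x / w x) l (𝓝 δ) := by
  have hLL : Tendsto (fun x ↦ L x / L x) l (𝓝 1) :=
    tendsto_const_nhds.congr' <| (hL.eventually_ne_atTop 0).mono fun x hx ↦ (div_self hx).symm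
  have hratio := (tendsto_div_of_isBoundedUnder_abs_sub hL huv hv).div
    (tendsto_div_of_isBoundedUnder_abs_sub hL hwL hLL) one_ne_zero
  rw [div_one] at hratio
  refine hratio.congr' ((hL.eventually_ne_atTop 0).mono fun x hx ↦ ?_)
  exact div_div_div_cancel_right₀ hx _ _

lemma tendsto_div_of_tendsto_mul {c u v : α → ℝ} {a : ℝ} (hc : ∀ᶠ x in l, c x ≠ 0)
    (hu : Tendsto (fun x ↦ c x * u x) l (𝓝 a)) (hv : Tendsto (fun x ↦ c x * v x) l (𝓝 1)) :
    Tendsto (fun x ↦ u x / v x) l (𝓝 a) := by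
  simpa using (hu.div hv one_ne_zero).congr' (hc.mono fun x hx ↦ mul_div_mul_left _ _ hx)

end Asymptotics

lemma tendsto_sub_mul_tsum_nat_rpow_neg :
    Tendsto (fun z : ℝ ↦ (z - 1) * ∑' n : ℕ, (n : ℝ) ^ (-z)) (𝓝[>] 1) (𝓝 1) := by
  simpa only [one_div, ← Real.rpow_neg (Nat.cast_nonneg _)] using tendsto_sub_mul_tsum_nat_rpow

lemma tendsto_sub_one_nhdsGT_one : Tendsto (fun z : ℝ ↦ z - 1) (𝓝[>] 1) (𝓝[>] 0) := by
  refine tendsto_nhdsWithin_iff.mpr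
    ⟨?_, eventually_nhdsWithin_of_forall fun _ hz ↦ Set.mem_Ioi.mpr (sub_pos.mpr hz)⟩
  simpa using tendsto_nhdsWithin_of_tendsto_nhds ((continuous_sub_right (1 : ℝ)).tendsto 1)

lemma tendsto_log_one_div_sub_one_atTop :
    Tendsto (fun z : ℝ ↦ Real.log (1 / (z - 1))) (𝓝[>] 1) atTop := by
  simpa only [one_div, Function.comp_def, Pi.inv_apply] using
    Real.tendsto_log_atTop.comp tendsto_sub_one_nhdsGT_one.inv_tendsto_nhdsGT_zero

lemma tendsto_log_tsum_nat_rpow_neg_sub_log_one_div_sub_one :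
    Tendsto (fun z : ℝ ↦ Real.log (∑' n : ℕ, (n : ℝ) ^ (-z)) - Real.log (1 / (z - 1)))
      (𝓝[>] 1) (𝓝 0) := by
  have hlog : Tendsto (fun z : ℝ ↦ Real.log ((z - 1) * ∑' n : ℕ, (n : ℝ) ^ (-z))) (𝓝[>] 1)
      (𝓝 0) := by
    simpa [Function.comp_def] using
      (Real.continuousAt_log one_ne_zero).tendsto.comp tendsto_sub_mul_tsum_nat_rpow_neg
  refine hlog.congr' ?_
  filter_upwards [self_mem_nhdsWithin] with z (hz : 1 < z)
  have hζ : 1 ≤ ∑' n : ℕ, (n : ℝ) ^ (-z) := by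
    simpa using (Real.summable_nat_rpow.mpr (by linarith)).le_tsum 1
      fun n _ ↦ Real.rpow_nonneg n.cast_nonneg (-z)
  rw [Real.log_mul (by linarith) (by linarith), one_div, Real.log_inv]
  ring

/-- Let `S` be a set of primes, `χ : ℕ → ℝ` a multiplicative function with
values in `{0,1}` that is characteristic on `S`, and `A = {n | χ n = 1}`.
(i) If `S` has Dirichlet density `δS`, then `lim_{z→1⁺} log D_χ(z) / log ζ(z) = δS`.
(ii) If `A` has Dedekind-Dirichlet density `δA`, then `lim_{z→1⁺} D_χ(z)/ζ(z) = δA`. -/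
theorem dirichlet_density_via_log_Dchi_and_dedekind_density_via_Dchi
    (S : Set ℕ) (hS : ∀ p ∈ S, Nat.Prime p)
    (χ : ℕ → ℝ) (hχ1 : χ 1 = 1)
    (hχmul : ∀ m n : ℕ, Nat.Coprime m n → χ (m * n) = χ m * χ n)
    (hχval : ∀ n : ℕ, χ n = 0 ∨ χ n = 1)
    (hchar : ∀ p : ℕ, Nat.Prime p → (χ p = 1 ↔ p ∈ S)) :
    (∀ δS : ℝ,
      Tendsto (fun z : ℝ => (∑' p : S, ((p : ℕ) : ℝ) ^ (-z)) / Real.log (1 / (z - 1)))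
        (𝓝[>] 1) (𝓝 δS) →
      Tendsto (fun z : ℝ =>
          Real.log (∑' n : ℕ, χ n * (n : ℝ) ^ (-z)) / Real.log (∑' n : ℕ, (n : ℝ) ^ (-z)))
        (𝓝[>] 1) (𝓝 δS)) ∧
    (∀ δA : ℝ,
      Tendsto (fun z : ℝ => (z - 1) * ∑' n : {n : ℕ | χ n = 1}, ((n : ℕ) : ℝ) ^ (-z))
        (𝓝[>] 1) (𝓝 δA) →
      Tendsto (fun z : ℝ =>
          (∑' n : ℕ, χ n * (n : ℝ) ^ (-z)) / (∑' n : ℕ, (n : ℝ) ^ (-z)))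
        (𝓝[>] 1) (𝓝 δA)) := by
  refine ⟨fun δS hP ↦ ?_, fun δA hA ↦ ?_⟩
  · have hχ_mem : ∀ n, 0 ≤ χ n ∧ χ n ≤ 1 := fun n ↦ by rcases hχval n with h | h <;> simp [h]
    obtain ⟨C, hC⟩ := exists_abs_log_tsum_mul_rpow_sub_tsum_primes_le hχ1 hχmul
      (fun n ↦ (hχ_mem n).1) (fun n ↦ (hχ_mem n).2)
    refine tendsto_div_of_isBoundedUnder_abs_sub_of_isBoundedUnder_abs_sub
      tendsto_log_one_div_sub_one_atTop (isBoundedUnder_of_eventually_le (a := C) ?_)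
      tendsto_log_tsum_nat_rpow_neg_sub_log_one_div_sub_one.abs.isBoundedUnder_le hP
    filter_upwards [self_mem_nhdsWithin] with z hz
    rw [← tsum_primes_mul_eq_tsum_subtype hS hχval hchar fun n ↦ (n : ℝ) ^ (-z)]
    exact hC z hz
  · exact tendsto_div_of_tendsto_mul
      (eventually_nhdsWithin_of_forall fun z hz ↦ sub_ne_zero.mpr (ne_of_gt hz))
      (hA.congr fun z ↦ by rw [tsum_mul_eq_tsum_setOf_eq_one hχval])
      tendsto_sub_mul_tsum_nat_rpow_neg
end

section
/- Let S be a set of primes, let χ : ℕ → ℝ be a multiplicative function taking values in {0,1} that is characteristic on S, and let A = {n ∈ ℕ : χ(n) = 1}. If A has a Dedekind-Dirichlet density δ(A) with δ(A) ≠ 0, then S has Dirichlet density 1. -/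
/-!
With `F z = ∑_{n ∈ A} n^{-z} = ∑ χ n n^{-z}`, the Euler product writes `log F z` as a sum over
primes of the logarithms of the Euler factors `1 + χ p p^{-z} + O(p^{-2z})`, so
`log F z = P_S(z) + O(1)` uniformly for `z > 1`. On the other hand `(z - 1) F z → δ(A) > 0`
gives `log F z = log (1 / (z - 1)) + O(1)`. Hence `P_S(z) - log (1 / (z - 1))` stays bounded
while `log (1 / (z - 1)) → ∞`.
-/

open Filter Topology Asymptotics

lemma HasProd.hasSum_log {ι : Type*} {f : ι → ℝ} {a : ℝ} (h : HasProd f a) (hf : ∀ i, 0 < f i)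
    (ha : 0 < a) : HasSum (fun i => Real.log (f i)) (Real.log a) :=
  (((Real.continuousAt_log ha.ne').tendsto).comp h).congr fun _ =>
    Real.log_prod fun i _ => (hf i).ne'

lemma abs_log_tsum_sub_le_of_le_geometric_s2 {a : ℕ → ℝ} {r : ℝ} (hr : r ≤ 1 / 2) (ha0 : a 0 = 1)
    (ha_nonneg : ∀ e, 0 ≤ a e) (ha_le : ∀ e, a e ≤ r ^ e) :
    |Real.log (∑' e, a e) - a 1| ≤ 2 * r ^ 2 := by
  have hx : 0 ≤ a 1 := ha_nonneg 1
  have hxr : a 1 ≤ r := (ha_le 1).trans_eq (pow_one r)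
  have hr0 : 0 ≤ r := hx.trans hxr
  have hgeom : Summable (r ^ ·) := summable_geometric_of_lt_one hr0 (by linarith)
  have ha : Summable a := hgeom.of_nonneg_of_le ha_nonneg ha_le
  set t := ∑' e, a (e + 2)
  have ht0 : 0 ≤ t := tsum_nonneg fun e => ha_nonneg _
  have ht : t ≤ 2 * r ^ 2 :=
    calc t ≤ ∑' e, r ^ e * r ^ 2 :=
          ((summable_nat_add_iff 2).mpr ha).tsum_le_tsum
            (fun e => (ha_le _).trans_eq (pow_add r e 2)) (hgeom.mul_right _)
      _ = (1 - r)⁻¹ * r ^ 2 := by rw [tsum_mul_right, tsum_geometric_of_lt_one hr0 (by linarith)]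
      _ ≤ 2 * r ^ 2 := by
          gcongr
          rw [inv_le_comm₀ (by linarith) two_pos]
          linarith
  have hsplit : ∑' e, a e = 1 + a 1 + t := by
    rw [← ha.sum_add_tsum_nat_add 2, Finset.sum_range_succ, Finset.sum_range_one, ha0]
  rw [hsplit, abs_le]
  constructor
  · have hlog : 1 - (1 + a 1)⁻¹ ≤ Real.log (1 + a 1 + t) :=
      (Real.one_sub_inv_le_log_of_pos (by linarith)).trans
        (Real.log_le_log (by linarith) (by linarith))
    have hinv : a 1 - a 1 ^ 2 ≤ 1 - (1 + a 1)⁻¹ := by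
      have hx1 : 0 < 1 + a 1 := by linarith
      rw [show 1 - (1 + a 1)⁻¹ = a 1 / (1 + a 1) by field_simp; ring, le_div_iff₀ hx1]
      nlinarith [pow_nonneg hx 3]
    nlinarith
  · linarith [Real.log_le_sub_one_of_pos (show 0 < 1 + a 1 + t by linarith)]

lemma Nat.Primes.rpow_neg_le_one_half (p : Nat.Primes) {z : ℝ} (hz : 1 ≤ z) :
    ((p : ℕ) : ℝ) ^ (-z) ≤ 1 / 2 := by
  have hp : (2 : ℝ) ≤ (p : ℕ) := by exact_mod_cast p.prop.two_le
  calc ((p : ℕ) : ℝ) ^ (-z) ≤ ((p : ℕ) : ℝ) ^ (-1 : ℝ) :=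
        Real.rpow_le_rpow_of_exponent_le (by linarith) (by linarith)
    _ ≤ 1 / 2 := by
        rw [Real.rpow_neg_one, one_div]
        exact inv_anti₀ two_pos hp

lemma abs_log_tsum_prime_pow_sub_le {g : ℕ → ℝ} {z : ℝ} (hz : 1 < z) (hg1 : g 1 = 1)
    (hg0 : ∀ n, 0 ≤ g n) (hg_le : ∀ n, g n ≤ (n : ℝ) ^ (-z)) (p : Nat.Primes) :
    |Real.log (∑' e, g ((p : ℕ) ^ e)) - g p| ≤ 2 * ((p : ℕ) : ℝ) ^ (-2 : ℝ) := by
  have hp : (1 : ℝ) ≤ (p : ℕ) := by exact_mod_cast p.prop.one_lt.le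
  set r := ((p : ℕ) : ℝ) ^ (-z)
  have hfactor := abs_log_tsum_sub_le_of_le_geometric_s2 (a := fun e => g ((p : ℕ) ^ e))
    (p.rpow_neg_le_one_half hz.le) (by simpa using hg1) (fun e => hg0 _) fun e =>
      (hg_le _).trans_eq (by rw [Nat.cast_pow, ← Real.rpow_pow_comm (by linarith)])
  calc _ ≤ 2 * r ^ 2 := by simpa using hfactor
    _ ≤ 2 * ((p : ℕ) : ℝ) ^ (-2 : ℝ) := by
      rw [← Real.rpow_natCast, ← Real.rpow_mul (by linarith)]
      gcongr
      push_cast; linarith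

theorem abs_log_tsum_sub_tsum_primes_le_s2 {g : ℕ → ℝ} {z : ℝ} (hz : 1 < z) (hg1 : g 1 = 1)
    (hmul : ∀ {m n : ℕ}, m.Coprime n → g (m * n) = g m * g n)
    (hg0 : ∀ n, 0 ≤ g n) (hg_le : ∀ n, g n ≤ (n : ℝ) ^ (-z)) :
    |Real.log (∑' n, g n) - ∑' p : Nat.Primes, g p| ≤
      2 * ∑' p : Nat.Primes, ((p : ℕ) : ℝ) ^ (-2 : ℝ) := by
  have hsum : Summable g := (Real.summable_nat_rpow.mpr (by linarith)).of_nonneg_of_le hg0 hg_le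
  have hg_zero : g 0 = 0 :=
    le_antisymm ((hg_le 0).trans_eq (by simp [Real.zero_rpow (by linarith : -z ≠ 0)])) (hg0 0)
  have hprod := EulerProduct.eulerProduct_hasProd hg1 hmul
    (hsum.congr fun n => (Real.norm_of_nonneg (hg0 n)).symm) hg_zero
  have hfactor_pos (p : Nat.Primes) : 0 < ∑' e, g ((p : ℕ) ^ e) := by
    refine one_pos.trans_le ?_
    simpa [hg1] using (hsum.comp_injective (Nat.pow_right_injective p.prop.two_le)).le_tsum 0
      fun e _ => hg0 _
  have hlog := hprod.hasSum_log hfactor_pos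
    (one_pos.trans_le (by simpa [hg1] using hsum.le_tsum 1 fun n _ => hg0 n))
  have hprimes : HasSum (fun p : Nat.Primes => g p) (∑' p : Nat.Primes, g p) :=
    (hsum.comp_injective Subtype.val_injective).hasSum
  rw [← Real.norm_eq_abs, ← (hlog.sub hprimes).tsum_eq]
  exact tsum_of_norm_bounded ((Nat.Primes.summable_rpow.mpr (by norm_num)).hasSum.mul_left 2)
    (abs_log_tsum_prime_pow_sub_le hz hg1 hg0 hg_le)

section Indicator

variable {χ : ℕ → ℝ}

lemma tsum_setOf_eq_one (hχval : ∀ n, χ n = 0 ∨ χ n = 1) (f : ℕ → ℝ) :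
    ∑' n : {n | χ n = 1}, f n = ∑' n, χ n * f n := by
  rw [tsum_subtype]
  congr 1 with n
  rcases hχval n with h | h <;> simp [Set.indicator, h]

lemma tsum_subtype_eq_tsum_primes_mul {S : Set ℕ} (hS : ∀ p ∈ S, p.Prime)
    (hχval : ∀ n, χ n = 0 ∨ χ n = 1) (hchar : ∀ p : ℕ, p.Prime → (χ p = 1 ↔ p ∈ S))
    (f : ℕ → ℝ) : ∑' p : S, f p = ∑' p : Nat.Primes, χ p * f p := by
  rw [tsum_subtype S f, ← tsum_subtype_eq_of_support_subset (s := {p : ℕ | p.Prime})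
    (Set.support_indicator_subset.trans hS)]
  refine tsum_congr fun p => ?_
  have hp := hchar p p.prop
  rcases hχval p with h | h
  · simp [h, Set.indicator_of_notMem (mt hp.mpr (by simp [h]))]
  · simp [h, Set.indicator_of_mem (hp.mp h)]

theorem abs_log_tsum_mul_rpow_sub_tsum_primes_le {z : ℝ} (hz : 1 < z) (hχ1 : χ 1 = 1)
    (hχmul : ∀ m n : ℕ, m.Coprime n → χ (m * n) = χ m * χ n) (hχval : ∀ n, χ n = 0 ∨ χ n = 1) :
    |Real.log (∑' n : ℕ, χ n * (n : ℝ) ^ (-z)) - ∑' p : Nat.Primes, χ p * ((p : ℕ) : ℝ) ^ (-z)| ≤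
      2 * ∑' p : Nat.Primes, ((p : ℕ) : ℝ) ^ (-2 : ℝ) := by
  refine abs_log_tsum_sub_tsum_primes_le_s2 hz (by simp [hχ1]) (fun {m n} hmn => ?_) (fun n => ?_)
    fun n => ?_
  · rw [hχmul m n hmn, Nat.cast_mul, Real.mul_rpow m.cast_nonneg n.cast_nonneg]
    ring
  all_goals rcases hχval n with h | h <;> simp [h, Real.rpow_nonneg]

end Indicator

lemma tendsto_div_nhds_one_of_isBigO_sub {α : Type*} {l : Filter α} {u v : α → ℝ}
    (hv : Tendsto v l atTop) (h : (u - v) =O[l] (fun _ => (1 : ℝ))) : Tendsto (u / v) l (𝓝 1) :=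
  (isEquivalent_iff_tendsto_one (hv.eventually_ne_atTop 0)).mp
    (h.trans_isLittleO ((isLittleO_one_left_iff ℝ).mpr (tendsto_norm_atTop_atTop.comp hv)))

lemma tendsto_log_one_div_sub_one_nhdsGT :
    Tendsto (fun z : ℝ => Real.log (1 / (z - 1))) (𝓝[>] 1) atTop := by
  refine Real.tendsto_log_atTop.comp ?_
  simp only [one_div]
  refine tendsto_inv_nhdsGT_zero.comp
    (tendsto_nhdsWithin_of_tendsto_nhds_of_eventually_within _ ?_ ?_)
  · exact ((continuous_sub_right (1 : ℝ)).tendsto' 1 0 (sub_self 1)).mono_left nhdsWithin_le_nhds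
  · filter_upwards [self_mem_nhdsWithin] with z hz
    exact sub_pos.mpr (Set.mem_Ioi.mp hz)

/-- Let `S` be a set of primes, `χ : ℕ → ℝ` a multiplicative function with
values in `{0,1}` that is characteristic on `S`, and `A = {n | χ n = 1}`. If `A` has a nonzero
Dedekind-Dirichlet density, then `S` has Dirichlet density `1`. -/
theorem dirichlet_density_one_of_dedekind_density_ne_zero
    (S : Set ℕ) (hS : ∀ p ∈ S, Nat.Prime p)
    (χ : ℕ → ℝ) (hχ1 : χ 1 = 1)
    (hχmul : ∀ m n : ℕ, Nat.Coprime m n → χ (m * n) = χ m * χ n)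
    (hχval : ∀ n : ℕ, χ n = 0 ∨ χ n = 1)
    (hchar : ∀ p : ℕ, Nat.Prime p → (χ p = 1 ↔ p ∈ S))
    (δA : ℝ) (hδA : δA ≠ 0)
    (hA : Tendsto (fun z : ℝ => (z - 1) * ∑' n : {n : ℕ | χ n = 1}, ((n : ℕ) : ℝ) ^ (-z))
      (𝓝[>] 1) (𝓝 δA)) :
    Tendsto (fun z : ℝ => (∑' p : S, ((p : ℕ) : ℝ) ^ (-z)) / Real.log (1 / (z - 1)))
      (𝓝[>] 1) (𝓝 1) := by
  set F : ℝ → ℝ := fun z => ∑' n : ℕ, χ n * (n : ℝ) ^ (-z)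
  have hF : Tendsto (fun z => (z - 1) * F z) (𝓝[>] 1) (𝓝 δA) :=
    hA.congr fun z => by rw [tsum_setOf_eq_one hχval fun n => (n : ℝ) ^ (-z)]
  have hδA_pos : 0 < δA := by
    refine (ge_of_tendsto hA ?_).lt_of_ne' hδA
    filter_upwards [self_mem_nhdsWithin] with z hz
    exact mul_nonneg (sub_nonneg.mpr (le_of_lt hz))
      (tsum_nonneg fun n => Real.rpow_nonneg n.1.cast_nonneg _)
  have hbounded : (fun z => ∑' p : S, ((p : ℕ) : ℝ) ^ (-z) - Real.log (F z)) =O[𝓝[>] 1]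
      (fun _ => (1 : ℝ)) := by
    refine .of_bound (2 * ∑' p : Nat.Primes, ((p : ℕ) : ℝ) ^ (-2 : ℝ)) ?_
    filter_upwards [self_mem_nhdsWithin] with z hz
    rw [norm_one, mul_one, Real.norm_eq_abs, abs_sub_comm,
      tsum_subtype_eq_tsum_primes_mul hS hχval hchar fun n => (n : ℝ) ^ (-z)]
    exact abs_log_tsum_mul_rpow_sub_tsum_primes_le hz hχ1 hχmul hχval
  have hlog : Tendsto (fun z => Real.log ((z - 1) * F z)) (𝓝[>] 1) (𝓝 (Real.log δA)) :=
    (Real.continuousAt_log hδA_pos.ne').tendsto.comp hF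
  refine tendsto_div_nhds_one_of_isBigO_sub tendsto_log_one_div_sub_one_nhdsGT ?_
  refine (hbounded.add (hlog.isBigO_one ℝ)).congr' ?_ EventuallyEq.rfl
  filter_upwards [hF.eventually_ne hδA] with z hzF
  dsimp only [Pi.sub_apply]
  rw [Real.log_mul (left_ne_zero_of_mul hzF) (right_ne_zero_of_mul hzF), one_div, Real.log_inv]
  ring
end

section
/- Let ℙ = ℙ₀ ⊔ ℙ₊ ⊔ ℙ₋ be a partition of the set of all primes into three weakly regular sets such that ℙ₀ has Dirichlet density 0 and the Dirichlet density of ℙ₋ is not zero. Let ψ : ℕ → ℝ be a multiplicative arithmetic function taking values in {0, 1, −1} such that for every prime p: ψ(p) = 0 if and only if p ∈ ℙ₀, ψ(p) = 1 if and only if p ∈ ℙ₊, and ψ(p) = −1 if and only if p ∈ ℙ₋. Then the set {n ∈ ℕ : ψ(n) ≠ 0} has a Dedekind-Dirichlet density d > 0, and both sets {n ∈ ℕ : ψ(n) > 0} and {n ∈ ℕ : ψ(n) < 0} have Dedekind-Dirichlet density equal to d/2. -/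
open Filter Topology

/-- A set of primes `S` is *weakly regular* (with constant `a`, which is then its Dirichlet
density) if `P_S(z) = a·log(1/(z-1)) + g(z)` on `{Re z > 1}` for some function `g` holomorphic
on `{Re z > 1}` and continuous on `{Re z ≥ 1}`. -/
def WeaklyRegular (S : Set ℕ) (a : ℝ) : Prop :=
  ∃ g : ℂ → ℂ, DifferentiableOn ℂ g {z : ℂ | 1 < z.re} ∧
    ContinuousOn g {z : ℂ | 1 ≤ z.re} ∧
    ∀ z : ℂ, 1 < z.re →
      (∑' p : S, ((p : ℕ) : ℂ) ^ (-z)) = (a : ℂ) * Complex.log (1 / (z - 1)) + g z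

/-!
Write `f ≈ a·L` when `f(z) - a·log (1/(z-1))` has a limit as `z → 1⁺`. For multiplicative `c`
with `|c| ≤ 1` the Euler product gives `|∑ c(n) n^{-z}| ≤ exp (∑_p c(p) p^{-z} + C)`, and for
`c ≥ 0` even `∑ c(n) n^{-z} = exp (∑_p c(p) p^{-z} + R(z))` with `R` continuous at `1`.
For `c = 1`, comparing with `(z - 1) ζ(z) → 1` shows `∑_p p^{-z} ≈ L`, so `a₀ + a₊ + a₋ = 1`;
and `a₋ ≥ 0` because `P_{ℙ₋} ≥ 0`. For `c = ψ²` the prime sum is `P_{ℙ₊} + P_{ℙ₋} ≈ L`, so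
`(z - 1) ∑ ψ(n)² n^{-z}` tends to some `d > 0`. For `c = ψ` it is `P_{ℙ₊} - P_{ℙ₋} ≈ (1 - 2a₋)·L`
with `1 - 2a₋ < 1`, so `(z - 1) ∑ ψ(n) n^{-z} → 0`. Finally the indicators of `{ψ > 0}` and
`{ψ < 0}` are `(ψ² ± ψ)/2`.
-/

open Real

theorem tendsto_log_sub_one_nhdsGT_one :
    Tendsto (fun z : ℝ => log (z - 1)) (𝓝[>] 1) atBot := by
  refine tendsto_log_nhdsGT_zero.comp (tendsto_nhdsWithin_iff.2 ⟨?_, ?_⟩)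
  · exact tendsto_nhdsWithin_of_tendsto_nhds
      (by simpa using (continuous_sub_right (1 : ℝ)).tendsto 1)
  · filter_upwards [self_mem_nhdsWithin] with z (hz : 1 < z) using sub_pos.2 hz

theorem sub_one_mul_exp_eq_exp_add_log {z : ℝ} (hz : 1 < z) (y : ℝ) :
    (z - 1) * exp y = exp (y + log (z - 1)) := by
  rw [exp_add, exp_log (sub_pos.2 hz), mul_comm]

/-- The real-variable content of `f = a·log (1/(z-1)) + g` with `g` continuous at `1`. -/
def HasLogSingularity (f : ℝ → ℝ) (a : ℝ) : Prop :=
  ∃ b, Tendsto (fun z => f z + a * log (z - 1)) (𝓝[>] 1) (𝓝 b)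

namespace HasLogSingularity

variable {f g : ℝ → ℝ} {a b : ℝ}

theorem congr' (h : HasLogSingularity f a) (hfg : f =ᶠ[𝓝[>] 1] g) : HasLogSingularity g a :=
  let ⟨b, hb⟩ := h
  ⟨b, hb.congr' (hfg.mono fun z hz => by rw [hz])⟩

theorem add (hf : HasLogSingularity f a) (hg : HasLogSingularity g b) :
    HasLogSingularity (fun z => f z + g z) (a + b) :=
  let ⟨_, hf⟩ := hf
  let ⟨_, hg⟩ := hg
  ⟨_, (hf.add hg).congr fun z => by ring⟩

theorem const_mul (hf : HasLogSingularity f a) (r : ℝ) :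
    HasLogSingularity (fun z => r * f z) (r * a) :=
  let ⟨_, hf⟩ := hf
  ⟨_, (hf.const_mul r).congr fun z => by ring⟩

theorem add_tendsto (hf : HasLogSingularity f a) (hg : Tendsto g (𝓝[>] 1) (𝓝 b)) :
    HasLogSingularity (fun z => f z + g z) a :=
  let ⟨_, hf⟩ := hf
  ⟨_, (hf.add hg).congr fun z => by ring⟩

theorem tendsto_atBot (h : HasLogSingularity f a) (ha : a < 0) : Tendsto f (𝓝[>] 1) atBot := by
  obtain ⟨b, hb⟩ := h
  refine (hb.add_atBot (tendsto_log_sub_one_nhdsGT_one.const_mul_atBot (neg_pos.2 ha))).congr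
    fun z => ?_
  ring

theorem nonneg (h : HasLogSingularity f a) (hf : ∀ᶠ z in 𝓝[>] 1, 0 ≤ f z) : 0 ≤ a := by
  by_contra! ha
  obtain ⟨z, hz, hz'⟩ :=
    (((h.tendsto_atBot ha).eventually (eventually_lt_atBot 0)).and hf).exists
  linarith

theorem unique (ha : HasLogSingularity f a) (hb : HasLogSingularity f b) : a = b := by
  by_contra hab
  obtain ⟨c, hc⟩ := ha
  obtain ⟨d, hd⟩ := hb
  have hlog : Tendsto (fun z : ℝ => log (z - 1)) (𝓝[>] 1) (𝓝 ((a - b)⁻¹ * (c - d))) :=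
    ((hc.sub hd).const_mul (a - b)⁻¹).congr fun z => by field_simp [sub_ne_zero.2 hab]; ring
  exact not_tendsto_nhds_of_tendsto_atBot tendsto_log_sub_one_nhdsGT_one _ hlog

theorem exists_tendsto_sub_one_mul_exp (h : HasLogSingularity f 1) :
    ∃ d, 0 < d ∧ Tendsto (fun z => (z - 1) * exp (f z)) (𝓝[>] 1) (𝓝 d) := by
  obtain ⟨b, hb⟩ := h
  refine ⟨exp b, exp_pos b, ((continuous_exp.tendsto b).comp hb).congr' ?_⟩
  filter_upwards [self_mem_nhdsWithin] with z hz
  simp [sub_one_mul_exp_eq_exp_add_log hz]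

theorem tendsto_sub_one_mul_exp_of_lt_one (h : HasLogSingularity f a) (ha : a < 1) :
    Tendsto (fun z => (z - 1) * exp (f z)) (𝓝[>] 1) (𝓝 0) := by
  have h' : HasLogSingularity (fun z => f z + log (z - 1)) (a - 1) :=
    let ⟨_, hb⟩ := h
    ⟨_, hb.congr fun z => by ring⟩
  refine (tendsto_exp_atBot.comp (h'.tendsto_atBot (by linarith))).congr' ?_
  filter_upwards [self_mem_nhdsWithin] with z hz
  simp [sub_one_mul_exp_eq_exp_add_log hz]

end HasLogSingularity

theorem WeaklyRegular.hasLogSingularity {S : Set ℕ} {a : ℝ} (h : WeaklyRegular S a) :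
    HasLogSingularity (fun z => ∑' p : S, ((p : ℕ) : ℝ) ^ (-z)) a := by
  obtain ⟨g, -, hg, hS⟩ := h
  have hre : Tendsto (fun z : ℝ => (g z).re) (𝓝[>] 1) (𝓝 (g 1).re) := by
    have : Tendsto (fun z : ℝ => (z : ℂ)) (𝓝[>] 1) (𝓝[{z : ℂ | 1 ≤ z.re}] 1) :=
      Complex.continuous_ofReal.continuousWithinAt.tendsto_nhdsWithin fun z hz => by
        simpa using le_of_lt hz
    exact (Complex.continuous_re.tendsto _).comp ((hg 1 (by simp)).tendsto.comp this)
  refine ⟨(g 1).re, hre.congr' ?_⟩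
  filter_upwards [self_mem_nhdsWithin] with z (hz : 1 < z)
  have hcpow (p : S) : ((p : ℕ) : ℂ) ^ (-(z : ℂ)) = (((p : ℕ) : ℝ) ^ (-z) : ℝ) := by
    rw [Complex.ofReal_cpow (Nat.cast_nonneg _)]
    push_cast
    rfl
  have hlog : Complex.log (1 / ((z : ℂ) - 1)) = (log (1 / (z - 1)) : ℝ) := by
    rw [Complex.ofReal_log (by have := sub_pos.2 hz; positivity)]
    push_cast
    rfl
  have hreal := congrArg Complex.re (hS z (by simpa using hz))
  rw [tsum_congr hcpow, ← Complex.ofReal_tsum, hlog] at hreal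
  simp only [Complex.ofReal_re, Complex.add_re, Complex.re_ofReal_mul] at hreal
  rw [hreal, one_div, log_inv]
  ring

theorem summable_mul_pow_of_abs_le_one {a : ℕ → ℝ} (ha : ∀ k, |a k| ≤ 1) {x : ℝ}
    (hx₀ : 0 ≤ x) (hx₁ : x < 1) : Summable fun k => a k * x ^ k :=
  (summable_geometric_of_lt_one hx₀ hx₁).of_norm_bounded fun k => by
    rw [norm_mul, norm_pow, norm_eq_abs, norm_eq_abs, abs_of_nonneg hx₀]
    exact mul_le_of_le_one_left (by positivity) (ha k)

theorem abs_tsum_mul_pow_sub_one_sub_le {a : ℕ → ℝ} (ha : ∀ k, |a k| ≤ 1) (ha₀ : a 0 = 1)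
    {x : ℝ} (hx₀ : 0 ≤ x) (hx : x ≤ 1 / 2) :
    |∑' k, a k * x ^ k - 1 - a 1 * x| ≤ 2 * x ^ 2 := by
  have hx₁ : x < 1 := by linarith
  have htail : HasSum (fun k => x ^ 2 * x ^ k) (x ^ 2 * (1 - x)⁻¹) :=
    (hasSum_geometric_of_lt_one hx₀ hx₁).mul_left _
  rw [← (summable_mul_pow_of_abs_le_one ha hx₀ hx₁).sum_add_tsum_nat_add 2]
  simp only [Finset.sum_range_succ, Finset.sum_range_zero, ha₀, pow_zero, pow_one]
  calc |0 + 1 * 1 + a 1 * x + ∑' k, a (k + 2) * x ^ (k + 2) - 1 - a 1 * x|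
      = ‖∑' k, a (k + 2) * x ^ (k + 2)‖ := by rw [norm_eq_abs]; ring_nf
    _ ≤ x ^ 2 * (1 - x)⁻¹ := tsum_of_norm_bounded htail fun k => by
        rw [norm_mul, norm_eq_abs, norm_pow, norm_eq_abs, abs_of_nonneg hx₀, pow_add,
          mul_comm (x ^ k)]
        exact mul_le_of_le_one_left (by positivity) (ha _)
    _ ≤ x ^ 2 * 2 := by
        gcongr
        rw [inv_le_comm₀ (by linarith) (by norm_num)]
        linarith
    _ = 2 * x ^ 2 := mul_comm _ _

theorem natCast_rpow_neg_le_half {p : ℕ} (hp : 2 ≤ p) {z : ℝ} (hz : 1 ≤ z) :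
    (p : ℝ) ^ (-z) ≤ 1 / 2 := by
  have hp' : (2 : ℝ) ≤ p := by exact_mod_cast hp
  calc (p : ℝ) ^ (-z) ≤ (p : ℝ) ^ (-1 : ℝ) :=
        rpow_le_rpow_of_exponent_le (by linarith) (by linarith)
    _ = (p : ℝ)⁻¹ := rpow_neg_one _
    _ ≤ 1 / 2 := by rw [one_div]; exact inv_anti₀ (by norm_num) hp'

theorem sq_natCast_rpow_neg_le {p : ℕ} (hp : 1 ≤ p) {z : ℝ} (hz : 1 ≤ z) :
    ((p : ℝ) ^ (-z)) ^ 2 ≤ (p : ℝ) ^ (-2 : ℝ) := by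
  rw [← rpow_natCast, ← rpow_mul (Nat.cast_nonneg _)]
  exact rpow_le_rpow_of_exponent_le (by exact_mod_cast hp) (by push_cast; linarith)

theorem summable_primes_two_mul_rpow_neg_two :
    Summable fun p : Nat.Primes => 2 * ((p : ℕ) : ℝ) ^ (-2 : ℝ) :=
  ((summable_nat_rpow.2 (by norm_num)).comp_injective Nat.Primes.coe_nat_injective).mul_left 2

theorem hasProd_le_of_nonneg {ι : Type*} {f g : ι → ℝ} {a b : ℝ} (h₀ : ∀ i, 0 ≤ f i)
    (h : ∀ i, f i ≤ g i) (hf : HasProd f a) (hg : HasProd g b) : a ≤ b :=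
  le_of_tendsto_of_tendsto' hf hg fun _ => Finset.prod_le_prod (fun i _ => h₀ i) fun i _ => h i

noncomputable def eulerFactor (c : ℕ → ℝ) (p : ℕ) (z : ℝ) : ℝ :=
  ∑' k : ℕ, c (p ^ k) * ((p : ℝ) ^ (-z)) ^ k

section EulerProduct

variable {c : ℕ → ℝ} {p : ℕ} {z : ℝ}

theorem summable_mul_rpow_neg (hc : ∀ n, |c n| ≤ 1) (hz : 1 < z) :
    Summable fun n : ℕ => c n * (n : ℝ) ^ (-z) :=
  (summable_nat_rpow.2 (by linarith : -z < -1)).of_norm_bounded fun n => by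
    rw [norm_mul, norm_eq_abs, norm_of_nonneg (by positivity)]
    exact mul_le_of_le_one_left (by positivity) (hc n)

theorem summable_eulerFactor (hc : ∀ n, |c n| ≤ 1) (hp : 2 ≤ p) (hz : 1 ≤ z) :
    Summable fun k => c (p ^ k) * ((p : ℝ) ^ (-z)) ^ k :=
  summable_mul_pow_of_abs_le_one (fun k => hc _) (by positivity)
    (by linarith [natCast_rpow_neg_le_half hp hz])

theorem abs_eulerFactor_sub_le (hc₁ : c 1 = 1) (hc : ∀ n, |c n| ≤ 1) (hp : 2 ≤ p)
    (hz : 1 ≤ z) :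
    |eulerFactor c p z - 1 - c p * (p : ℝ) ^ (-z)| ≤ 2 * ((p : ℝ) ^ (-z)) ^ 2 := by
  simpa [eulerFactor] using abs_tsum_mul_pow_sub_one_sub_le (a := fun k => c (p ^ k))
    (fun k => hc _) (by simpa using hc₁) (by positivity) (natCast_rpow_neg_le_half hp hz)

theorem one_add_le_eulerFactor (hc₀ : ∀ n, 0 ≤ c n) (hc₁ : c 1 = 1) (hc : ∀ n, |c n| ≤ 1)
    (hp : 2 ≤ p) (hz : 1 ≤ z) : 1 + c p * (p : ℝ) ^ (-z) ≤ eulerFactor c p z := by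
  simpa [eulerFactor, Finset.sum_range_succ, hc₁] using
    (summable_eulerFactor hc hp hz).sum_le_tsum (Finset.range 2) fun k _ =>
      mul_nonneg (hc₀ _) (by positivity)

theorem one_le_eulerFactor (hc₀ : ∀ n, 0 ≤ c n) (hc₁ : c 1 = 1) (hc : ∀ n, |c n| ≤ 1)
    (hp : 2 ≤ p) (hz : 1 ≤ z) : 1 ≤ eulerFactor c p z :=
  (le_add_of_nonneg_right (mul_nonneg (hc₀ p) (by positivity))).trans
    (one_add_le_eulerFactor hc₀ hc₁ hc hp hz)

theorem abs_log_eulerFactor_sub_le (hc₀ : ∀ n, 0 ≤ c n) (hc₁ : c 1 = 1)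
    (hc : ∀ n, |c n| ≤ 1) (hp : 2 ≤ p) (hz : 1 ≤ z) :
    |log (eulerFactor c p z) - c p * (p : ℝ) ^ (-z)| ≤ 2 * ((p : ℝ) ^ (-z)) ^ 2 := by
  set x := (p : ℝ) ^ (-z)
  have hx : 0 ≤ x := by positivity
  have hcx : 0 ≤ c p * x := mul_nonneg (hc₀ p) hx
  have hcx' : c p * x ≤ x := mul_le_of_le_one_left hx (abs_le.1 (hc p)).2
  have hlow := one_add_le_eulerFactor hc₀ hc₁ hc hp hz
  have hup := (abs_le.1 (abs_eulerFactor_sub_le hc₁ hc hp hz)).2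
  have hpos : 0 < eulerFactor c p z := by linarith
  rw [abs_le]
  constructor
  · -- with `Φ = eulerFactor c p z`: `log Φ ≥ 1 - Φ⁻¹ ≥ 1 - (1 + c p x)⁻¹ ≥ c p x - (c p x)²`
    have h₁ := one_sub_inv_le_log_of_pos hpos
    have h₂ : (eulerFactor c p z)⁻¹ ≤ (1 + c p * x)⁻¹ := inv_anti₀ (by linarith) hlow
    have h₃ : (1 + c p * x)⁻¹ ≤ 1 - c p * x + (c p * x) ^ 2 := by
      rw [inv_le_iff_one_le_mul₀ (by linarith)]
      nlinarith [pow_nonneg hcx 3]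
    nlinarith
  · linarith [log_le_sub_one_of_pos hpos]

theorem abs_eulerFactor_le_exp (hc₁ : c 1 = 1) (hc : ∀ n, |c n| ≤ 1) (hp : 2 ≤ p)
    (hz : 1 ≤ z) :
    |eulerFactor c p z| ≤ exp (c p * (p : ℝ) ^ (-z) + 2 * ((p : ℝ) ^ (-z)) ^ 2) := by
  have h := abs_le.1 (abs_eulerFactor_sub_le hc₁ hc hp hz)
  have hcx : -(p : ℝ) ^ (-z) ≤ c p * (p : ℝ) ^ (-z) := by
    nlinarith [(abs_le.1 (hc p)).1, rpow_nonneg (Nat.cast_nonneg p) (-z)]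
  have hx := natCast_rpow_neg_le_half hp hz
  have hexp := add_one_le_exp (c p * (p : ℝ) ^ (-z) + 2 * ((p : ℝ) ^ (-z)) ^ 2)
  exact abs_le.2 ⟨by linarith, by linarith⟩

theorem continuousOn_eulerFactor (hc : ∀ n, |c n| ≤ 1) (hp : 2 ≤ p) :
    ContinuousOn (eulerFactor c p) (Set.Ici 1) := by
  have hx : Continuous fun z : ℝ => (p : ℝ) ^ (-z) :=
    (continuous_const_rpow (by positivity)).comp continuous_neg
  refine continuousOn_tsum (u := fun k => (1 / 2 : ℝ) ^ k)
    (fun k => (continuous_const.mul (hx.pow k)).continuousOn)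
    summable_geometric_two fun k z (hz : 1 ≤ z) => ?_
  have hx₀ : 0 ≤ (p : ℝ) ^ (-z) := by positivity
  rw [norm_mul, norm_pow, norm_eq_abs, norm_eq_abs, abs_of_nonneg hx₀]
  exact (mul_le_of_le_one_left (by positivity) (hc _)).trans
    (pow_le_pow_left₀ hx₀ (natCast_rpow_neg_le_half hp hz) k)

theorem hasProd_eulerFactor (hc₁ : c 1 = 1)
    (hmul : ∀ m n : ℕ, m.Coprime n → c (m * n) = c m * c n) (hc : ∀ n, |c n| ≤ 1)
    (hz : 1 < z) :
    HasProd (fun p : Nat.Primes => eulerFactor c p z) (∑' n : ℕ, c n * (n : ℝ) ^ (-z)) := by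
  have hz₀ : -z ≠ 0 := by linarith
  refine (EulerProduct.eulerProduct_hasProd (f := fun n : ℕ => c n * (n : ℝ) ^ (-z))
    (by simp [hc₁]) (fun {m n} hmn => ?_) (summable_mul_rpow_neg hc hz).abs
    (by simp [zero_rpow hz₀])).congr_fun fun p => tsum_congr fun k => ?_
  · push_cast
    rw [mul_rpow (Nat.cast_nonneg m) (Nat.cast_nonneg n), hmul m n hmn]
    ring
  · rw [Nat.cast_pow, ← rpow_natCast, ← rpow_natCast, ← rpow_mul (Nat.cast_nonneg _),
      ← rpow_mul (Nat.cast_nonneg _), mul_comm (k : ℝ), mul_comm]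

theorem exists_tsum_eq_exp_tsum_primes_add (hc₀ : ∀ n, 0 ≤ c n) (hc₁ : c 1 = 1)
    (hmul : ∀ m n : ℕ, m.Coprime n → c (m * n) = c m * c n) (hc : ∀ n, |c n| ≤ 1) :
    ∃ R : ℝ → ℝ, ContinuousWithinAt R (Set.Ioi 1) 1 ∧ ∀ z, 1 < z →
      ∑' n : ℕ, c n * (n : ℝ) ^ (-z) =
        exp (∑' p : Nat.Primes, c p * ((p : ℕ) : ℝ) ^ (-z) + R z) := by
  have hbound (p : Nat.Primes) (z : ℝ) (hz : 1 ≤ z) :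
      ‖log (eulerFactor c p z) - c p * ((p : ℕ) : ℝ) ^ (-z)‖ ≤
        2 * ((p : ℕ) : ℝ) ^ (-2 : ℝ) :=
    (abs_log_eulerFactor_sub_le hc₀ hc₁ hc p.prop.two_le hz).trans
      (by gcongr; exact sq_natCast_rpow_neg_le p.prop.one_le hz)
  refine ⟨fun z => ∑' p : Nat.Primes, (log (eulerFactor c p z) - c p * ((p : ℕ) : ℝ) ^ (-z)),
    ?_, fun z hz => ?_⟩
  · refine (continuousOn_tsum (fun p => ?_) summable_primes_two_mul_rpow_neg_two hbound 1
      Set.self_mem_Ici).mono Set.Ioi_subset_Ici_self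
    exact ((continuousOn_eulerFactor hc p.prop.two_le).log fun z hz =>
      (one_pos.trans_le (one_le_eulerFactor hc₀ hc₁ hc p.prop.two_le hz)).ne').sub
      (continuous_const.mul ((continuous_const_rpow
        (Nat.cast_ne_zero.2 p.prop.ne_zero)).comp continuous_neg)).continuousOn
  · have hP : Summable fun p : Nat.Primes => c p * ((p : ℕ) : ℝ) ^ (-z) :=
      (summable_mul_rpow_neg hc hz).comp_injective Nat.Primes.coe_nat_injective
    have hR := summable_primes_two_mul_rpow_neg_two.of_norm_bounded fun p => hbound p z hz.le
    have hlog := hP.hasSum.add hR.hasSum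
    simp only [add_sub_cancel] at hlog
    exact (hasProd_eulerFactor hc₁ hmul hc hz).unique (hasProd_of_hasSum_log (fun p =>
      one_pos.trans_le (one_le_eulerFactor hc₀ hc₁ hc p.prop.two_le hz.le)) hlog)

theorem exists_abs_tsum_le_exp_tsum_primes_add (hc₁ : c 1 = 1)
    (hmul : ∀ m n : ℕ, m.Coprime n → c (m * n) = c m * c n) (hc : ∀ n, |c n| ≤ 1) :
    ∃ C, ∀ z : ℝ, 1 < z →
      |∑' n : ℕ, c n * (n : ℝ) ^ (-z)| ≤
        exp (∑' p : Nat.Primes, c p * ((p : ℕ) : ℝ) ^ (-z) + C) := by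
  refine ⟨∑' p : Nat.Primes, 2 * ((p : ℕ) : ℝ) ^ (-2 : ℝ), fun z hz => ?_⟩
  have hP : Summable fun p : Nat.Primes => c p * ((p : ℕ) : ℝ) ^ (-z) :=
    (summable_mul_rpow_neg hc hz).comp_injective Nat.Primes.coe_nat_injective
  have hsq (p : Nat.Primes) :
      2 * (((p : ℕ) : ℝ) ^ (-z)) ^ 2 ≤ 2 * ((p : ℕ) : ℝ) ^ (-2 : ℝ) := by
    gcongr
    exact sq_natCast_rpow_neg_le p.prop.one_le hz.le
  have hsq' := summable_primes_two_mul_rpow_neg_two.of_nonneg_of_le (fun p => by positivity) hsq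
  calc |∑' n : ℕ, c n * (n : ℝ) ^ (-z)|
      ≤ exp (∑' p : Nat.Primes, c p * ((p : ℕ) : ℝ) ^ (-z) +
          ∑' p : Nat.Primes, 2 * (((p : ℕ) : ℝ) ^ (-z)) ^ 2) :=
        hasProd_le_of_nonneg (fun _ => abs_nonneg _)
          (fun p => abs_eulerFactor_le_exp hc₁ hc p.prop.two_le hz.le)
          (hasProd_eulerFactor hc₁ hmul hc hz).abs (hP.hasSum.add hsq'.hasSum).rexp
    _ ≤ _ := exp_le_exp.2 (add_le_add_right
        (Summable.tsum_le_tsum hsq hsq' summable_primes_two_mul_rpow_neg_two) _)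

theorem exists_pos_tendsto_sub_one_mul_tsum (hc₀ : ∀ n, 0 ≤ c n) (hc₁ : c 1 = 1)
    (hmul : ∀ m n : ℕ, m.Coprime n → c (m * n) = c m * c n) (hc : ∀ n, |c n| ≤ 1)
    (h : HasLogSingularity (fun z => ∑' p : Nat.Primes, c p * ((p : ℕ) : ℝ) ^ (-z)) 1) :
    ∃ d, 0 < d ∧
      Tendsto (fun z => (z - 1) * ∑' n : ℕ, c n * (n : ℝ) ^ (-z)) (𝓝[>] 1) (𝓝 d) := by
  obtain ⟨R, hR, hrep⟩ := exists_tsum_eq_exp_tsum_primes_add hc₀ hc₁ hmul hc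
  obtain ⟨d, hd, hlim⟩ := (h.add_tendsto hR.tendsto).exists_tendsto_sub_one_mul_exp
  refine ⟨d, hd, hlim.congr' ?_⟩
  filter_upwards [self_mem_nhdsWithin] with z (hz : 1 < z)
  rw [hrep z hz]

theorem tendsto_sub_one_mul_tsum_of_lt_one {a : ℝ} (hc₁ : c 1 = 1)
    (hmul : ∀ m n : ℕ, m.Coprime n → c (m * n) = c m * c n) (hc : ∀ n, |c n| ≤ 1)
    (h : HasLogSingularity (fun z => ∑' p : Nat.Primes, c p * ((p : ℕ) : ℝ) ^ (-z)) a)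
    (ha : a < 1) :
    Tendsto (fun z => (z - 1) * ∑' n : ℕ, c n * (n : ℝ) ^ (-z)) (𝓝[>] 1) (𝓝 0) := by
  obtain ⟨C, hC⟩ := exists_abs_tsum_le_exp_tsum_primes_add hc₁ hmul hc
  refine squeeze_zero_norm' ?_
    ((h.add_tendsto (tendsto_const_nhds (x := C))).tendsto_sub_one_mul_exp_of_lt_one ha)
  filter_upwards [self_mem_nhdsWithin] with z (hz : 1 < z)
  rw [norm_mul, norm_eq_abs, norm_eq_abs, abs_of_pos (sub_pos.2 hz)]
  exact mul_le_mul_of_nonneg_left (hC z hz) (sub_pos.2 hz).le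

end EulerProduct

theorem hasLogSingularity_tsum_primes_rpow_neg :
    HasLogSingularity (fun z => ∑' p : Nat.Primes, ((p : ℕ) : ℝ) ^ (-z)) 1 := by
  obtain ⟨R, hR, hrep⟩ := exists_tsum_eq_exp_tsum_primes_add (c := fun _ => 1)
    (fun _ => zero_le_one) rfl (fun _ _ _ => (mul_one 1).symm) (fun _ => by simp)
  simp only [one_mul] at hrep
  have hζ : Tendsto (fun z : ℝ => (z - 1) * ∑' n : ℕ, (n : ℝ) ^ (-z)) (𝓝[>] 1) (𝓝 1) :=
    tendsto_sub_mul_tsum_nat_rpow.congr fun z => by simp [rpow_neg]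
  refine ⟨log 1 - R 1,
    (((continuousAt_log one_ne_zero).tendsto.comp hζ).sub hR.tendsto).congr' ?_⟩
  filter_upwards [self_mem_nhdsWithin] with z (hz : 1 < z)
  simp only [Function.comp_apply]
  rw [hrep z hz, log_mul (sub_pos.2 hz).ne' (exp_pos _).ne', log_exp]
  ring

section Partition

variable {ψ : ℕ → ℝ} {S₀ Sₚ Sₘ : Set ℕ}

theorem mem_iff_prime_and_eq {S : Set ℕ} {v : ℝ} (hS : ∀ p ∈ S, p.Prime)
    (hv : ∀ p, p.Prime → (ψ p = v ↔ p ∈ S)) (p : ℕ) : p ∈ S ↔ p.Prime ∧ ψ p = v :=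
  ⟨fun h => ⟨hS p h, (hv p (hS p h)).2 h⟩, fun h => (hv p h.1).1 h.2⟩

theorem tsum_primes_comp_eq (hψ : ∀ p, p.Prime → ψ p = 0 ∨ ψ p = 1 ∨ ψ p = -1)
    (hS₀ : ∀ p, p ∈ S₀ ↔ p.Prime ∧ ψ p = 0) (hSₚ : ∀ p, p ∈ Sₚ ↔ p.Prime ∧ ψ p = 1)
    (hSₘ : ∀ p, p ∈ Sₘ ↔ p.Prime ∧ ψ p = -1) (g : ℝ → ℝ) {F : ℕ → ℝ} (hF : Summable F) :
    ∑' p : Nat.Primes, g (ψ p) * F p =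
      g 0 * ∑' p : S₀, F p + g 1 * ∑' p : Sₚ, F p + g (-1) * ∑' p : Sₘ, F p := by
  rw [show ∑' p : Nat.Primes, g (ψ p) * F p =
        ∑' n, {p | p.Prime}.indicator (fun p => g (ψ p) * F p) n
      from tsum_subtype {p : ℕ | p.Prime} fun p => g (ψ p) * F p,
    tsum_subtype S₀, tsum_subtype Sₚ, tsum_subtype Sₘ,
    ← tsum_mul_left, ← tsum_mul_left, ← tsum_mul_left,
    ← Summable.tsum_add ((hF.indicator _).mul_left _) ((hF.indicator _).mul_left _),
    ← Summable.tsum_add (((hF.indicator _).mul_left _).add ((hF.indicator _).mul_left _))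
      ((hF.indicator _).mul_left _)]
  refine tsum_congr fun n => ?_
  by_cases hn : n.Prime
  · rcases hψ n hn with h | h | h <;> norm_num [Set.indicator, hS₀, hSₚ, hSₘ, hn, h]
  · simp [Set.indicator, hS₀, hSₚ, hSₘ, hn]

theorem hasLogSingularity_tsum_primes_comp {a₀ aₚ aₘ : ℝ}
    (hψ : ∀ p, p.Prime → ψ p = 0 ∨ ψ p = 1 ∨ ψ p = -1)
    (hS₀ : ∀ p, p ∈ S₀ ↔ p.Prime ∧ ψ p = 0) (hSₚ : ∀ p, p ∈ Sₚ ↔ p.Prime ∧ ψ p = 1)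
    (hSₘ : ∀ p, p ∈ Sₘ ↔ p.Prime ∧ ψ p = -1)
    (h₀ : HasLogSingularity (fun z => ∑' p : S₀, ((p : ℕ) : ℝ) ^ (-z)) a₀)
    (hₚ : HasLogSingularity (fun z => ∑' p : Sₚ, ((p : ℕ) : ℝ) ^ (-z)) aₚ)
    (hₘ : HasLogSingularity (fun z => ∑' p : Sₘ, ((p : ℕ) : ℝ) ^ (-z)) aₘ) (g : ℝ → ℝ) :
    HasLogSingularity (fun z => ∑' p : Nat.Primes, g (ψ p) * ((p : ℕ) : ℝ) ^ (-z))
      (g 0 * a₀ + g 1 * aₚ + g (-1) * aₘ) := by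
  refine (((h₀.const_mul (g 0)).add (hₚ.const_mul (g 1))).add
    (hₘ.const_mul (g (-1)))).congr' ?_
  filter_upwards [self_mem_nhdsWithin] with z (hz : 1 < z)
  exact (tsum_primes_comp_eq hψ hS₀ hSₚ hSₘ g
    (summable_nat_rpow.2 (by linarith : -z < -1))).symm

end Partition

theorem tendsto_sub_one_mul_tsum_subtype {s : Set ℕ} {c₁ c₂ : ℕ → ℝ} {α β l₁ l₂ : ℝ}
    (hc₁ : ∀ n, |c₁ n| ≤ 1) (hc₂ : ∀ n, |c₂ n| ≤ 1)
    (hs : ∀ n, s.indicator 1 n = α * c₁ n + β * c₂ n)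
    (h₁ : Tendsto (fun z => (z - 1) * ∑' n : ℕ, c₁ n * (n : ℝ) ^ (-z)) (𝓝[>] 1) (𝓝 l₁))
    (h₂ : Tendsto (fun z => (z - 1) * ∑' n : ℕ, c₂ n * (n : ℝ) ^ (-z)) (𝓝[>] 1) (𝓝 l₂)) :
    Tendsto (fun z => (z - 1) * ∑' n : s, ((n : ℕ) : ℝ) ^ (-z)) (𝓝[>] 1)
      (𝓝 (α * l₁ + β * l₂)) := by
  refine ((h₁.const_mul α).add (h₂.const_mul β)).congr' ?_
  filter_upwards [self_mem_nhdsWithin] with z (hz : 1 < z)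
  have hind (n : ℕ) : s.indicator (fun n : ℕ => (n : ℝ) ^ (-z)) n =
      α * (c₁ n * (n : ℝ) ^ (-z)) + β * (c₂ n * (n : ℝ) ^ (-z)) := by
    classical
    have h := hs n
    simp only [Set.indicator_apply, Pi.one_apply] at h ⊢
    split_ifs at h ⊢ <;> linear_combination (n : ℝ) ^ (-z) * h
  rw [tsum_subtype s fun n : ℕ => (n : ℝ) ^ (-z), tsum_congr hind,
    Summable.tsum_add ((summable_mul_rpow_neg hc₁ hz).mul_left _)
      ((summable_mul_rpow_neg hc₂ hz).mul_left _), tsum_mul_left, tsum_mul_left]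
  ring

theorem tendsto_sub_one_mul_tsum_setOf_sign {ψ : ℕ → ℝ} {d : ℝ}
    (hψ : ∀ n, ψ n = 0 ∨ ψ n = 1 ∨ ψ n = -1)
    (hA : Tendsto (fun z => (z - 1) * ∑' n : ℕ, ψ n ^ 2 * (n : ℝ) ^ (-z)) (𝓝[>] 1) (𝓝 d))
    (hB : Tendsto (fun z => (z - 1) * ∑' n : ℕ, ψ n * (n : ℝ) ^ (-z)) (𝓝[>] 1) (𝓝 0)) :
    Tendsto (fun z => (z - 1) * ∑' n : {n | ψ n ≠ 0}, ((n : ℕ) : ℝ) ^ (-z)) (𝓝[>] 1) (𝓝 d) ∧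
      Tendsto (fun z => (z - 1) * ∑' n : {n | 0 < ψ n}, ((n : ℕ) : ℝ) ^ (-z)) (𝓝[>] 1)
        (𝓝 (d / 2)) ∧
      Tendsto (fun z => (z - 1) * ∑' n : {n | ψ n < 0}, ((n : ℕ) : ℝ) ^ (-z)) (𝓝[>] 1)
        (𝓝 (d / 2)) := by
  have hψb (n : ℕ) : |ψ n| ≤ 1 := by rcases hψ n with h | h | h <;> simp [h]
  have hψsq (n : ℕ) : |ψ n ^ 2| ≤ 1 := by rcases hψ n with h | h | h <;> simp [h]
  refine ⟨?_, ?_, ?_⟩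
  · simpa using tendsto_sub_one_mul_tsum_subtype (s := {n | ψ n ≠ 0}) (α := 1) (β := 0)
      hψsq hψb (fun n => by rcases hψ n with h | h | h <;> simp [h]) hA hB
  · convert tendsto_sub_one_mul_tsum_subtype (s := {n | 0 < ψ n}) (α := 1 / 2) (β := 1 / 2)
      hψsq hψb (fun n => by rcases hψ n with h | h | h <;> (simp [h]; try norm_num)) hA hB
      using 2
    ring
  · convert tendsto_sub_one_mul_tsum_subtype (s := {n | ψ n < 0}) (α := 1 / 2) (β := -1 / 2)
      hψsq hψb (fun n => by rcases hψ n with h | h | h <;> (simp [h]; try norm_num)) hA hB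
      using 2
    ring

theorem dedekind_density_equidistribution_of_weaklyRegular_partition_general
    (P0 Pp Pm : Set ℕ)
    (hsub0 : ∀ p ∈ P0, Nat.Prime p) (hsubp : ∀ p ∈ Pp, Nat.Prime p)
    (hsubm : ∀ p ∈ Pm, Nat.Prime p)
    (hreg0 : WeaklyRegular P0 0)
    (ap : ℝ) (hregp : WeaklyRegular Pp ap)
    (am : ℝ) (hregm : WeaklyRegular Pm am) (ham : am ≠ 0)
    (ψ : ℕ → ℝ) (hψ1 : ψ 1 = 1)
    (hψmul : ∀ m n : ℕ, Nat.Coprime m n → ψ (m * n) = ψ m * ψ n)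
    (hψval : ∀ n : ℕ, ψ n = 0 ∨ ψ n = 1 ∨ ψ n = -1)
    (hψp : ∀ p : ℕ, Nat.Prime p →
      (ψ p = 0 ↔ p ∈ P0) ∧ (ψ p = 1 ↔ p ∈ Pp) ∧ (ψ p = -1 ↔ p ∈ Pm)) :
    ∃ d : ℝ, 0 < d ∧
      Tendsto (fun z : ℝ => (z - 1) * ∑' n : {n : ℕ | ψ n ≠ 0}, ((n : ℕ) : ℝ) ^ (-z))
        (𝓝[>] 1) (𝓝 d) ∧
      Tendsto (fun z : ℝ => (z - 1) * ∑' n : {n : ℕ | 0 < ψ n}, ((n : ℕ) : ℝ) ^ (-z))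
        (𝓝[>] 1) (𝓝 (d / 2)) ∧
      Tendsto (fun z : ℝ => (z - 1) * ∑' n : {n : ℕ | ψ n < 0}, ((n : ℕ) : ℝ) ^ (-z))
        (𝓝[>] 1) (𝓝 (d / 2)) := by
  have hψb (n : ℕ) : |ψ n| ≤ 1 := by rcases hψval n with h | h | h <;> simp [h]
  have hsing := hasLogSingularity_tsum_primes_comp (fun p _ => hψval p)
    (mem_iff_prime_and_eq hsub0 fun p hp => (hψp p hp).1)
    (mem_iff_prime_and_eq hsubp fun p hp => (hψp p hp).2.1)
    (mem_iff_prime_and_eq hsubm fun p hp => (hψp p hp).2.2)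
    hreg0.hasLogSingularity hregp.hasLogSingularity hregm.hasLogSingularity
  have hsum : ap + am = 1 := by
    have h := hsing fun _ => 1
    simp only [one_mul, zero_add] at h
    exact h.unique hasLogSingularity_tsum_primes_rpow_neg
  have ham₀ : 0 < am := (hregm.hasLogSingularity.nonneg
    (Eventually.of_forall fun z => tsum_nonneg fun p => by positivity)).lt_of_ne' ham
  obtain ⟨d, hd, hA⟩ := exists_pos_tendsto_sub_one_mul_tsum (c := fun n => ψ n ^ 2)
    (fun n => sq_nonneg _) (by simp [hψ1]) (fun m n h => by simp [hψmul m n h, mul_pow])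
    (fun n => by simpa using pow_le_one₀ (abs_nonneg _) (hψb n) (n := 2))
    (by convert hsing (· ^ 2) using 1; norm_num; linarith)
  have hB := tendsto_sub_one_mul_tsum_of_lt_one hψ1 hψmul hψb (hsing id) (by simp; linarith)
  exact ⟨d, hd, tendsto_sub_one_mul_tsum_setOf_sign hψval hA hB⟩

/-- Let `ℙ = ℙ₀ ⊔ ℙ₊ ⊔ ℙ₋` be a partition of the primes into three weakly
regular sets, with `δ(ℙ₀) = 0` and `δ(ℙ₋) ≠ 0`. Let `ψ : ℕ → ℝ` be multiplicative with values
in `{0,1,-1}` whose sign at each prime matches the partition. Then `{n : ψ(n) ≠ 0}` has a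
positive Dedekind-Dirichlet density `d`, and both `{n : ψ(n) > 0}` and `{n : ψ(n) < 0}` have
Dedekind-Dirichlet density `d/2`. -/
theorem dedekind_density_equidistribution_of_weaklyRegular_partition
    (P0 Pp Pm : Set ℕ)
    (hsub0 : ∀ p ∈ P0, Nat.Prime p) (hsubp : ∀ p ∈ Pp, Nat.Prime p)
    (hsubm : ∀ p ∈ Pm, Nat.Prime p)
    (hd0p : Disjoint P0 Pp) (hd0m : Disjoint P0 Pm) (hdpm : Disjoint Pp Pm)
    (hcover : P0 ∪ Pp ∪ Pm = {p : ℕ | Nat.Prime p})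
    (hreg0 : WeaklyRegular P0 0)
    (ap : ℝ) (hregp : WeaklyRegular Pp ap)
    (am : ℝ) (hregm : WeaklyRegular Pm am) (ham : am ≠ 0)
    (ψ : ℕ → ℝ) (hψ1 : ψ 1 = 1)
    (hψmul : ∀ m n : ℕ, Nat.Coprime m n → ψ (m * n) = ψ m * ψ n)
    (hψval : ∀ n : ℕ, ψ n = 0 ∨ ψ n = 1 ∨ ψ n = -1)
    (hψp : ∀ p : ℕ, Nat.Prime p →
      (ψ p = 0 ↔ p ∈ P0) ∧ (ψ p = 1 ↔ p ∈ Pp) ∧ (ψ p = -1 ↔ p ∈ Pm)) :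
    ∃ d : ℝ, 0 < d ∧
      Tendsto (fun z : ℝ => (z - 1) * ∑' n : {n : ℕ | ψ n ≠ 0}, ((n : ℕ) : ℝ) ^ (-z))
        (𝓝[>] 1) (𝓝 d) ∧
      Tendsto (fun z : ℝ => (z - 1) * ∑' n : {n : ℕ | 0 < ψ n}, ((n : ℕ) : ℝ) ^ (-z))
        (𝓝[>] 1) (𝓝 (d / 2)) ∧
      Tendsto (fun z : ℝ => (z - 1) * ∑' n : {n : ℕ | ψ n < 0}, ((n : ℕ) : ℝ) ^ (-z))
        (𝓝[>] 1) (𝓝 (d / 2)) :=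
  dedekind_density_equidistribution_of_weaklyRegular_partition_general P0 Pp Pm hsub0 hsubp hsubm
    hreg0 ap hregp am hregm ham ψ hψ1 hψmul hψval hψp
end

section
/- Let χ be a Dirichlet character of order dividing 2 (so χ takes values in {−1, 0, 1} ⊂ ℝ on ℕ). Let B : ℙ → ℝ be a map, let y ∈ ℝ with y ≠ 0, and define A : ℙ → ℝ by A(p) := B(p) − χ(p)/(y√p). Let D = {x₁, …, x_n} ⊆ [−1,1] be a finite set. Let f : (−1,1) → ℝ_{≥0} be an integrable function and w₁, …, w_n ≥ 0, and define the Borel measure μ on [−1,1] by μ(E) := ∫_E f(t) dt + Σ_{i=1}^n w_i δ_{x_i}(E), where δ_{x_i} is the Dirac measure at x_i; assume μ([−1,1]) = 1. For an interval I ⊆ [−1,1], set S_I := {p ∈ ℙ : B(p) ∈ I} and T'_I := {p ∈ ℙ : A(p) ∈ I and B(p) ∉ D}. Assume that for every subinterval I ⊆ [−1,1] (open, closed or half-open) the set S_I has natural density μ(I). Then for every subinterval I ⊆ [−1,1] (open, closed or half-open), the set T'_I has natural density ∫_I f(t) dt. -/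
/-!
Since `χ(p)/(y√p) → 0`, for every `δ > 0` and all but finitely many primes, `B(p)` in the
`δ`-shrinking of `I` forces `A(p) ∈ I`, while `A(p) ∈ I` forces `B(p)` into the `δ`-thickening of
`I` or outside `[-1, 1]`; the latter has density `1 - μ([-1, 1]) = 0`. Removing the finitely many
atoms `D` from `S_J` removes exactly the atomic part of `μ(J)`, leaving `∫_J f`, and this is
continuous in the endpoints of `J`, which squeezes the density of `T'_I` to `∫_I f`.
-/

open Filter Topology MeasureTheory Set

def primesUpTo (X : ℝ) : Set ℕ := {p | p.Prime ∧ (p : ℝ) ≤ X}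

lemma primesUpTo_eq_primesLE (X : ℝ) : primesUpTo X = ↑(Nat.primesLE ⌊X⌋₊) := by
  ext p
  simp only [primesUpTo, mem_ofPred_eq, Finset.mem_coe, Nat.mem_primesLE]
  exact ⟨fun ⟨hp, hpX⟩ => ⟨Nat.le_floor hpX, hp⟩,
    fun ⟨hpX, hp⟩ => ⟨hp, (Nat.le_floor_iff' hp.ne_zero).1 hpX⟩⟩

lemma finite_primesUpTo (X : ℝ) : (primesUpTo X).Finite := by
  rw [primesUpTo_eq_primesLE]
  exact Finset.finite_toSet _

lemma tendsto_ncard_primesUpTo :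
    Tendsto (fun X => ((primesUpTo X).ncard : ℝ)) atTop atTop := by
  simp only [primesUpTo_eq_primesLE, ncard_coe_finset, Nat.primesLE_card_eq_primeCounting]
  exact tendsto_natCast_atTop_atTop.comp (Nat.tendsto_primeCounting.comp tendsto_nat_floor_atTop)

noncomputable def primeRatio (S : Set ℕ) (X : ℝ) : ℝ :=
  ((primesUpTo X ∩ S).ncard : ℝ) / (primesUpTo X).ncard

def HasPrimeDensity (S : Set ℕ) (d : ℝ) : Prop :=
  Tendsto (primeRatio S) atTop (𝓝 d)

lemma hasPrimeDensity_iff_tendsto {S : Set ℕ} {d : ℝ} :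
    HasPrimeDensity S d ↔ Tendsto (fun X : ℝ =>
      ({p : ℕ | Nat.Prime p ∧ (p : ℝ) ≤ X ∧ p ∈ S}.ncard : ℝ) /
        ({p : ℕ | Nat.Prime p ∧ (p : ℝ) ≤ X}.ncard : ℝ)) atTop (𝓝 d) := by
  have h : ∀ X, primesUpTo X ∩ S = {p : ℕ | Nat.Prime p ∧ (p : ℝ) ≤ X ∧ p ∈ S} := fun X => by
    ext p
    simp [primesUpTo, and_assoc]
  refine Iff.of_eq (congrArg (Tendsto · atTop (𝓝 d)) (funext fun X => ?_))
  rw [primeRatio, h]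
  rfl

section

variable {S T : Set ℕ} {a b : ℝ}

lemma primeRatio_union (h : Disjoint S T) (X : ℝ) :
    primeRatio (S ∪ T) X = primeRatio S X + primeRatio T X := by
  have hfin := finite_primesUpTo X
  rw [primeRatio, primeRatio, primeRatio, ← add_div, inter_union_distrib_left,
    ncard_union_eq (h.mono inter_subset_right inter_subset_right) (hfin.inter_of_left S)
      (hfin.inter_of_left T)]
  push_cast
  rfl

lemma primeRatio_le_add_of_finite_diff (h : (S \ T).Finite) (X : ℝ) :
    primeRatio S X ≤ primeRatio T X + (S \ T).ncard / (primesUpTo X).ncard := by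
  rw [primeRatio, primeRatio, ← add_div]
  gcongr
  have hsub : primesUpTo X ∩ S ⊆ (primesUpTo X ∩ T) ∪ (S \ T) := by
    rintro p ⟨hpX, hpS⟩
    by_cases hpT : p ∈ T
    · exact Or.inl ⟨hpX, hpT⟩
    · exact Or.inr ⟨hpS, hpT⟩
  exact_mod_cast (ncard_le_ncard hsub (((finite_primesUpTo X).inter_of_left T).union h)).trans
    (ncard_union_le _ _)

lemma hasPrimeDensity_empty : HasPrimeDensity ∅ 0 :=
  tendsto_const_nhds.congr fun X => by simp [primeRatio]

lemma hasPrimeDensity_univ : HasPrimeDensity univ 1 :=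
  tendsto_const_nhds.congr' <| (tendsto_ncard_primesUpTo.eventually_gt_atTop 0).mono
    fun X hX => by rw [primeRatio, inter_univ, div_self hX.ne']

lemma HasPrimeDensity.union (h : Disjoint S T) (hS : HasPrimeDensity S a)
    (hT : HasPrimeDensity T b) : HasPrimeDensity (S ∪ T) (a + b) :=
  (hS.add hT).congr fun X => (primeRatio_union h X).symm

lemma HasPrimeDensity.diff (hTS : T ⊆ S) (hS : HasPrimeDensity S a)
    (hT : HasPrimeDensity T b) : HasPrimeDensity (S \ T) (a - b) := by
  refine (hS.sub hT).congr fun X => ?_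
  conv_lhs => rw [← sdiff_union_of_subset hTS, primeRatio_union disjoint_sdiff_left]
  exact add_sub_cancel_right _ _

lemma HasPrimeDensity.compl (hS : HasPrimeDensity S a) : HasPrimeDensity Sᶜ (1 - a) := by
  rw [compl_eq_univ_sdiff]
  exact hasPrimeDensity_univ.diff (subset_univ S) hS

lemma HasPrimeDensity.preimage_finset {α : Type*} [DecidableEq α] (B : ℕ → α) (F : Finset α)
    (c : α → ℝ) (h : ∀ v ∈ F, HasPrimeDensity (B ⁻¹' {v}) (c v)) :
    HasPrimeDensity (B ⁻¹' F) (∑ v ∈ F, c v) := by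
  induction F using Finset.induction_on with
  | empty => simpa using hasPrimeDensity_empty
  | insert v F hv ih =>
    rw [Finset.coe_insert, insert_eq, preimage_union, Finset.sum_insert hv]
    exact (h v (Finset.mem_insert_self v F)).union
      ((disjoint_singleton_left.2 hv).preimage B)
      (ih fun u hu => h u (Finset.mem_insert_of_mem hu))

lemma hasPrimeDensity_of_approx {L : ℝ}
    (hlow : ∀ ε > 0, ∃ S d, HasPrimeDensity S d ∧ L - ε < d ∧ (S \ T).Finite)
    (hup : ∀ ε > 0, ∃ S d, HasPrimeDensity S d ∧ d < L + ε ∧ (T \ S).Finite) :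
    HasPrimeDensity T L := by
  have hvanish (c : ℝ) : Tendsto (fun X => c / (primesUpTo X).ncard) atTop (𝓝 0) :=
    tendsto_const_nhds.div_atTop tendsto_ncard_primesUpTo
  refine tendsto_order.2 ⟨fun a ha => ?_, fun a ha => ?_⟩
  · obtain ⟨S, d, hS, hd, hST⟩ := hlow (L - a) (sub_pos.2 ha)
    have hlim := (hS.sub (hvanish (S \ T).ncard)).eventually
      (lt_mem_nhds (show a < d - 0 by linarith))
    filter_upwards [hlim] with X hX
    linarith [primeRatio_le_add_of_finite_diff hST X]
  · obtain ⟨S, d, hS, hd, hTS⟩ := hup (a - L) (sub_pos.2 ha)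
    have hlim := (hS.add (hvanish (T \ S).ncard)).eventually
      (gt_mem_nhds (show d + 0 < a by linarith))
    filter_upwards [hlim] with X hX
    linarith [primeRatio_le_add_of_finite_diff hTS X]

end

lemma Finset.sum_sum_indicator_singleton {ι α : Type*} [Fintype ι] [DecidableEq α]
    (F : Finset α) (x : ι → α) (w : ι → ℝ) :
    ∑ v ∈ F, ∑ i, ({v} : Set α).indicator (fun _ => w i) (x i) =
      ∑ i, (F : Set α).indicator (fun _ => w i) (x i) := by
  rw [Finset.sum_comm]
  refine Finset.sum_congr rfl fun i _ => ?_
  simp [Set.indicator_apply]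

lemma hasPrimeDensity_preimage_diff_range {ι α : Type*} [Fintype ι] {B : ℕ → α} {x : ι → α}
    {w : ι → ℝ} {J : Set α} {ν : ℝ}
    (hJ : HasPrimeDensity (B ⁻¹' J) (ν + ∑ i, J.indicator (fun _ => w i) (x i)))
    (hatom : ∀ v ∈ J ∩ range x,
      HasPrimeDensity (B ⁻¹' {v}) (∑ i, ({v} : Set α).indicator (fun _ => w i) (x i))) :
    HasPrimeDensity (B ⁻¹' (J \ range x)) ν := by
  classical
  have hfin : (J ∩ range x).Finite := (finite_range x).inter_of_right J
  have hatoms : HasPrimeDensity (B ⁻¹' (J ∩ range x)) (∑ i, J.indicator (fun _ => w i) (x i)) := by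
    have h := HasPrimeDensity.preimage_finset B hfin.toFinset _
      fun v hv => hatom v (hfin.mem_toFinset.1 hv)
    have hrange (i : ι) : (J ∩ range x).indicator (fun _ => w i) (x i) =
        J.indicator (fun _ => w i) (x i) := by
      simp only [indicator_apply, mem_inter_iff, mem_range_self, and_true]
    rwa [Finset.sum_sum_indicator_singleton, hfin.coe_toFinset, Finset.sum_congr rfl
      fun i _ => hrange i] at h
  have h := hJ.diff (preimage_mono inter_subset_left) hatoms
  rwa [← preimage_sdiff, sdiff_self_inter, add_sub_cancel_right] at h

lemma DirichletCharacter.tendsto_div_mul_sqrt {N : ℕ} (χ : DirichletCharacter ℝ N) (y : ℝ) :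
    Tendsto (fun p : ℕ => χ (p : ZMod N) / (y * √p)) atTop (𝓝 0) := by
  have hinv : Tendsto (fun p : ℕ => (y * √p)⁻¹) atTop (𝓝 0) := by
    simp_rw [mul_inv]
    simpa using (tendsto_inv_atTop_zero.comp
      (Real.tendsto_sqrt_atTop.comp tendsto_natCast_atTop_atTop)).const_mul y⁻¹
  simpa [div_eq_mul_inv] using isBoundedUnder_le_mul_tendsto_zero
    (isBoundedUnder_of ⟨1, fun p => χ.norm_le_one _⟩) hinv

lemma Set.OrdConnected.exists_Ioo_subset_subset_Icc {α : Type*}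
    [ConditionallyCompleteLinearOrder α] [Nonempty α] {I : Set α} (hI : I.OrdConnected)
    (hb : BddBelow I) (ha : BddAbove I) : ∃ a b, Ioo a b ⊆ I ∧ I ⊆ Icc a b := by
  rcases I.eq_empty_or_nonempty with rfl | hne
  · obtain ⟨a⟩ := ‹Nonempty α›
    exact ⟨a, a, by simp, empty_subset _⟩
  refine ⟨sInf I, sSup I, fun t ht => ?_, subset_Icc_csInf_csSup hb ha⟩
  obtain ⟨u, hu, hut⟩ := (isGLB_lt_iff (isGLB_csInf hne hb)).1 ht.1
  obtain ⟨v, hv, htv⟩ := (lt_isLUB_iff (isLUB_csSup hne ha)).1 ht.2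
  exact hI.out hu hv ⟨hut.le, htv.le⟩

lemma continuous_setIntegral_Ioc {E : Type*} [NormedAddCommGroup E] [NormedSpace ℝ E]
    {g : ℝ → E} (hg : Integrable g) : Continuous fun q : ℝ × ℝ => ∫ t in Ioc q.1 q.2, g t := by
  have hG : Continuous fun u => ∫ t in (0 : ℝ)..u, g t :=
    intervalIntegral.continuous_primitive (fun _ _ => hg.intervalIntegrable) 0
  -- `max c d` makes the formula valid also when `Ioc c d` is empty
  have hIoc (c d : ℝ) :
      ∫ t in Ioc c d, g t = (∫ t in (0 : ℝ)..max c d, g t) - ∫ t in (0 : ℝ)..c, g t := by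
    rw [intervalIntegral.integral_interval_sub_left hg.intervalIntegrable hg.intervalIntegrable,
      intervalIntegral.integral_of_le (le_max_left c d)]
    rcases le_total c d with h | h
    · rw [max_eq_right h]
    · rw [max_eq_left h, Ioc_self, Ioc_eq_empty h.not_gt]
  simp only [hIoc]
  exact (hG.comp (continuous_fst.max continuous_snd)).sub (hG.comp continuous_fst)

lemma exists_pos_lt_setIntegral_Ioc_add_sub {g : ℝ → ℝ} (hg : Integrable g) {a b c : ℝ}
    (hc : c < ∫ t in Ioc a b, g t) : ∃ δ > 0, c < ∫ t in Ioc (a + δ) (b - δ), g t := by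
  have h := ((continuous_setIntegral_Ioc hg).comp
    (by fun_prop : Continuous fun δ : ℝ => (a + δ, b - δ))).tendsto 0
  simp only [Function.comp_def, add_zero, sub_zero] at h
  exact (h.eventually (lt_mem_nhds hc)).exists_gt

lemma exists_pos_setIntegral_Ioc_sub_add_lt {g : ℝ → ℝ} (hg : Integrable g) {a b c : ℝ}
    (hc : ∫ t in Ioc a b, g t < c) : ∃ δ > 0, ∫ t in Ioc (a - δ) (b + δ), g t < c := by
  have h := ((continuous_setIntegral_Ioc hg).comp
    (by fun_prop : Continuous fun δ : ℝ => (a - δ, b + δ))).tendsto 0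
  simp only [Function.comp_def, add_zero, sub_zero] at h
  exact (h.eventually (gt_mem_nhds hc)).exists_gt

lemma Filter.Tendsto.finite_setOf_notMem_Ioo {e : ℕ → ℝ} (he : Tendsto e atTop (𝓝 0)) {δ : ℝ}
    (hδ : 0 < δ) : {p | e p ∉ Ioo (-δ) δ}.Finite := by
  rw [← Nat.cofinite_eq_atTop] at he
  exact he.eventually (Ioo_mem_nhds (neg_neg_of_pos hδ) hδ)

theorem hasPrimeDensity_preimage_sub_inter {B e : ℕ → ℝ} (he : Tendsto e atTop (𝓝 0))
    {R : Set ℕ} {l r : ℝ} {K : Set ℝ} {f : ℝ → ℝ} (hK : MeasurableSet K) (hKlr : K ⊆ Icc l r)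
    (hf : IntegrableOn f K)
    (hR : ∀ J ⊆ Icc l r, J.OrdConnected → HasPrimeDensity (B ⁻¹' J ∩ R) (∫ t in J ∩ K, f t))
    (hout : HasPrimeDensity (B ⁻¹' (Icc l r)ᶜ) 0) {I : Set ℝ} (hI : I ⊆ Icc l r)
    (hIc : I.OrdConnected) :
    HasPrimeDensity ((fun p => B p - e p) ⁻¹' I ∩ R) (∫ t in I ∩ K, f t) := by
  obtain ⟨a, b, hIoo, hIcc⟩ :=
    hIc.exists_Ioo_subset_subset_Icc (bddBelow_Icc.mono hI) (bddAbove_Icc.mono hI)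
  have hg : Integrable (K.indicator f) := (integrable_indicator_iff hK).2 hf
  have hint (J : Set ℝ) : ∫ t in J ∩ K, f t = ∫ t in J, K.indicator f t :=
    (setIntegral_indicator hK).symm
  have hIab : ∫ t in I, K.indicator f t = ∫ t in Ioc a b, K.indicator f t := by
    refine setIntegral_congr_set ((hIcc.eventuallyLE.trans Ioc_ae_eq_Icc.symm.le).antisymm ?_)
    exact Ioo_ae_eq_Ioc.symm.le.trans hIoo.eventuallyLE
  rw [hint, hIab]
  refine hasPrimeDensity_of_approx (fun ε hε => ?_) (fun ε hε => ?_)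
  · obtain ⟨δ, hδ, hlt⟩ := exists_pos_lt_setIntegral_Ioc_add_sub hg (sub_lt_self _ hε)
    have hJ : Ioc (a + δ) (b - δ) ⊆ I :=
      (Ioc_subset_Ioo (by linarith) (by linarith)).trans hIoo
    refine ⟨B ⁻¹' Ioc (a + δ) (b - δ) ∩ R, _, hR _ (hJ.trans hI) ordConnected_Ioc,
      by rwa [hint], (he.finite_setOf_notMem_Ioo hδ).subset ?_⟩
    rintro p ⟨⟨⟨hpa, hpb⟩, hpR⟩, hpT⟩ ⟨hep₁, hep₂⟩
    exact hpT ⟨hIoo ⟨by linarith, by linarith⟩, hpR⟩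
  · obtain ⟨δ, hδ, hlt⟩ := exists_pos_setIntegral_Ioc_sub_add_lt hg (lt_add_of_pos_right _ hε)
    have hdisj : Disjoint (B ⁻¹' (Ioc (a - δ) (b + δ) ∩ Icc l r) ∩ R) (B ⁻¹' (Icc l r)ᶜ) :=
      (disjoint_compl_right.preimage B).mono_left
        (inter_subset_left.trans (preimage_mono inter_subset_right))
    refine ⟨_, _, (hR _ inter_subset_right (ordConnected_Ioc.inter ordConnected_Icc)).union
      hdisj hout, ?_, (he.finite_setOf_notMem_Ioo hδ).subset ?_⟩
    · rwa [add_zero, inter_assoc, inter_eq_right.2 hKlr, hint]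
    rintro p ⟨⟨hpT, hpR⟩, hpS⟩ ⟨hep₁, hep₂⟩
    apply hpS
    by_cases hpB : B p ∈ Icc l r
    · have hpab : B p - e p ∈ Icc a b := hIcc hpT
      exact Or.inl ⟨⟨⟨by linarith [hpab.1], by linarith [hpab.2]⟩, hpB⟩, hpR⟩
    · exact Or.inr hpB

theorem perturbed_sequence_natural_density_general
    (N : ℕ) (χ : DirichletCharacter ℝ N)
    (B : ℕ → ℝ) (y : ℝ)
    (n : ℕ) (x : Fin n → ℝ) (hx : ∀ i, x i ∈ Set.Icc (-1 : ℝ) 1)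
    (f : ℝ → ℝ)
    (hfint : MeasureTheory.IntegrableOn f (Set.Ioo (-1 : ℝ) 1))
    (w : Fin n → ℝ)
    (hnorm : (∫ t in Set.Ioo (-1 : ℝ) 1, f t) + ∑ i, w i = 1)
    (hSdens : ∀ I : Set ℝ, I ⊆ Set.Icc (-1 : ℝ) 1 → I.OrdConnected →
      Tendsto (fun X : ℝ =>
          ({p : ℕ | Nat.Prime p ∧ (p : ℝ) ≤ X ∧ B p ∈ I}.ncard : ℝ) /
            ({p : ℕ | Nat.Prime p ∧ (p : ℝ) ≤ X}.ncard : ℝ))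
        atTop
        (𝓝 ((∫ t in I ∩ Set.Ioo (-1 : ℝ) 1, f t) +
          ∑ i, Set.indicator I (fun _ => w i) (x i)))) :
    ∀ I : Set ℝ, I ⊆ Set.Icc (-1 : ℝ) 1 → I.OrdConnected →
      Tendsto (fun X : ℝ =>
          ({p : ℕ | Nat.Prime p ∧ (p : ℝ) ≤ X ∧
              B p - χ ((p : ℕ) : ZMod N) / (y * Real.sqrt p) ∈ I ∧
              B p ∉ Set.range x}.ncard : ℝ) /
            ({p : ℕ | Nat.Prime p ∧ (p : ℝ) ≤ X}.ncard : ℝ))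
        atTop (𝓝 (∫ t in I ∩ Set.Ioo (-1 : ℝ) 1, f t)) := by
  intro I hI hIc
  have hB (J : Set ℝ) (hJ : J ⊆ Icc (-1) 1) (hJc : J.OrdConnected) :
      HasPrimeDensity (B ⁻¹' J)
        ((∫ t in J ∩ Ioo (-1) 1, f t) + ∑ i, J.indicator (fun _ => w i) (x i)) :=
    hasPrimeDensity_iff_tendsto.2 (hSdens J hJ hJc)
  have hout : HasPrimeDensity (B ⁻¹' (Icc (-1) 1)ᶜ) 0 := by
    have h := (hB _ subset_rfl ordConnected_Icc).compl
    rwa [inter_eq_right.2 Ioo_subset_Icc_self,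
      Finset.sum_congr rfl fun i _ => indicator_of_mem (hx i) _, hnorm, sub_self] at h
  have hatom (i : Fin n) : HasPrimeDensity (B ⁻¹' {x i})
      (∑ j, ({x i} : Set ℝ).indicator (fun _ => w j) (x j)) := by
    have hnull : volume ({x i} ∩ Ioo (-1 : ℝ) 1) = 0 :=
      measure_mono_null inter_subset_left (measure_singleton _)
    have h := hB {x i} (singleton_subset_iff.2 (hx i)) ordConnected_singleton
    rwa [Measure.restrict_eq_zero.2 hnull, integral_zero_measure, zero_add] at h
  have hrest (J : Set ℝ) (hJ : J ⊆ Icc (-1) 1) (hJc : J.OrdConnected) :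
      HasPrimeDensity (B ⁻¹' J ∩ (B ⁻¹' range x)ᶜ) (∫ t in J ∩ Ioo (-1) 1, f t) := by
    rw [← preimage_compl, ← preimage_inter, ← sdiff_eq]
    exact hasPrimeDensity_preimage_diff_range (hB J hJ hJc) fun v ⟨_, i, hi⟩ => hi ▸ hatom i
  exact hasPrimeDensity_iff_tendsto.1 (hasPrimeDensity_preimage_sub_inter
    (χ.tendsto_div_mul_sqrt y) measurableSet_Ioo Ioo_subset_Icc_self hfint hrest hout hI hIc)

/-- Let `χ` be a Dirichlet character of order dividing 2, `B : ℙ → ℝ`,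
`y ≠ 0`, and `A(p) := B(p) − χ(p)/(y√p)`. Let `D = {x₁,…,x_n} ⊆ [−1,1]`, let `f ≥ 0` be
integrable on `(−1,1)`, `w_i ≥ 0`, and let `μ(E) = ∫_E f + Σ w_i δ_{x_i}(E)` be the associated
probability measure on `[−1,1]`. If for every subinterval `I ⊆ [−1,1]` the set
`S_I = {p : B(p) ∈ I}` has natural density `μ(I)`, then for every subinterval `I ⊆ [−1,1]`
the set `T'_I = {p : A(p) ∈ I, B(p) ∉ D}` has natural density `∫_I f`. -/
theorem perturbed_sequence_natural_density
    (N : ℕ) (χ : DirichletCharacter ℝ N) (hχ2 : χ ^ 2 = 1)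
    (B : ℕ → ℝ) (y : ℝ) (hy : y ≠ 0)
    (n : ℕ) (x : Fin n → ℝ) (hx : ∀ i, x i ∈ Set.Icc (-1 : ℝ) 1)
    (f : ℝ → ℝ) (hf0 : ∀ t, 0 ≤ f t)
    (hfint : MeasureTheory.IntegrableOn f (Set.Ioo (-1 : ℝ) 1))
    (w : Fin n → ℝ) (hw : ∀ i, 0 ≤ w i)
    (hnorm : (∫ t in Set.Ioo (-1 : ℝ) 1, f t) + ∑ i, w i = 1)
    (hSdens : ∀ I : Set ℝ, I ⊆ Set.Icc (-1 : ℝ) 1 → I.OrdConnected →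
      Tendsto (fun X : ℝ =>
          ({p : ℕ | Nat.Prime p ∧ (p : ℝ) ≤ X ∧ B p ∈ I}.ncard : ℝ) /
            ({p : ℕ | Nat.Prime p ∧ (p : ℝ) ≤ X}.ncard : ℝ))
        atTop
        (𝓝 ((∫ t in I ∩ Set.Ioo (-1 : ℝ) 1, f t) +
          ∑ i, Set.indicator I (fun _ => w i) (x i)))) :
    ∀ I : Set ℝ, I ⊆ Set.Icc (-1 : ℝ) 1 → I.OrdConnected →
      Tendsto (fun X : ℝ =>
          ({p : ℕ | Nat.Prime p ∧ (p : ℝ) ≤ X ∧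
              B p - χ ((p : ℕ) : ZMod N) / (y * Real.sqrt p) ∈ I ∧
              B p ∉ Set.range x}.ncard : ℝ) /
            ({p : ℕ | Nat.Prime p ∧ (p : ℝ) ≤ X}.ncard : ℝ))
        atTop (𝓝 (∫ t in I ∩ Set.Ioo (-1 : ℝ) 1, f t)) :=
  perturbed_sequence_natural_density_general N χ B y n x hx f hfint w hnorm hSdens
end
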